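/- arXiv:1907.10760 — 4 statements merged into one kernel-verified Lean document; each statement's English description precedes it below -/
import Mathlib

section
/- A partial Steiner triple system in which any two blocks have a point in common is sequenceable. -/
set_option linter.unusedVariables false
set_option linter.unusedSectionVars false
set_option maxHeartbeats 1000000

/-- A partial Steiner triple system on point set `V` with block set `B`:
each block is a 3-element subset of `V`, and two distinct blocks meet in
at most one point. -/
def IsPSTS {α : Type*} [DecidableEq α] (V : Finset α) (B : Finset (Finset α)) : Prop :=
  (∀ b ∈ B, b ⊆ V ∧ b.card = 3) ∧
    ∀ b₁ ∈ B, ∀ b₂ ∈ B, b₁ ≠ b₂ → (b₁ ∩ b₂).card ≤ 1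

/-- `S` can be partitioned into pairwise disjoint blocks from `B`. -/
def IsBlockPartition {α : Type*} [DecidableEq α] (B : Finset (Finset α))
    (S : Finset α) : Prop :=
  ∃ P : Finset (Finset α), P ⊆ B ∧ (P : Set (Finset α)).Pairwise Disjoint ∧
    P.biUnion id = S

/-- A PSTS is sequenceable if some sequence listing each point of `V` exactly once
has no proper (nonempty, not the whole sequence) segment that can be partitioned
into pairwise disjoint blocks. -/
def Sequenceable {α : Type*} [DecidableEq α] (V : Finset α)
    (B : Finset (Finset α)) : Prop :=
  ∃ l : List α, l.Nodup ∧ l.toFinset = V ∧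
    ∀ i m : ℕ, (l.drop i).take m ≠ [] → ((l.drop i).take m).length < l.length →
      ¬ IsBlockPartition B ((l.drop i).take m).toFinset

section Aux

variable {α : Type*} [DecidableEq α] {V : Finset α} {B : Finset (Finset α)}

lemma psts_single_block (hT : IsPSTS V B)
    (hint : ∀ b₁ ∈ B, ∀ b₂ ∈ B, (b₁ ∩ b₂).Nonempty)
    {S : Finset α} (hS : S.Nonempty) (h : IsBlockPartition B S) : S ∈ B := by
  obtain ⟨P, hPB, hPd, hPU⟩ := h
  obtain ⟨x, hx⟩ := hS
  rw [← hPU] at hx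
  simp only [Finset.mem_biUnion, id] at hx
  obtain ⟨b, hbP, hxb⟩ := hx
  have hall : ∀ b' ∈ P, b' = b := by
    intro b' hb'
    by_contra hne
    have hd : Disjoint b' b := hPd hb' hbP hne
    have hne2 := hint b' (hPB hb') b (hPB hbP)
    rw [Finset.disjoint_iff_inter_eq_empty] at hd
    rw [hd] at hne2
    exact Finset.not_nonempty_empty hne2
  have hP : P = {b} := Finset.eq_singleton_iff_unique_mem.mpr ⟨hbP, hall⟩
  rw [hP, Finset.singleton_biUnion, id] at hPU
  rw [← hPU]
  exact hPB hbP

lemma nodup_of_toFinset_card {l : List α} (h : l.toFinset.card = l.length) :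
    l.Nodup := by
  rw [← List.dedup_eq_self]
  apply List.Sublist.eq_of_length (List.dedup_sublist l)
  rw [List.card_toFinset] at h
  exact h

lemma seq_of_safe (hT : IsPSTS V B)
    (hint : ∀ b₁ ∈ B, ∀ b₂ ∈ B, (b₁ ∩ b₂).Nonempty)
    {l : List α} (hnd : l.Nodup) (hV : l.toFinset = V)
    (hsafe : ∀ p q r : α, 3 < l.length → [p, q, r] <:+: l →
      ([p, q, r]).toFinset ∉ B) :
    Sequenceable V B := by
  refine ⟨l, hnd, hV, ?_⟩
  intro i m hne hlen hbp
  set seg := (l.drop i).take m with hseg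
  have hSne : seg.toFinset.Nonempty := (List.toFinset_nonempty_iff seg).mpr hne
  have hmem := psts_single_block hT hint hSne hbp
  have hinf : seg <:+: l :=
    ((l.drop i).take_prefix m).isInfix.trans (l.drop_suffix i).isInfix
  have hndseg : seg.Nodup := hnd.sublist hinf.sublist
  have hcard : seg.toFinset.card = 3 := (hT.1 _ hmem).2
  have hlen3 : seg.length = 3 := by
    rw [← List.toFinset_card_of_nodup hndseg, hcard]
  obtain ⟨p, q, r, hpqr⟩ := List.length_eq_three.mp hlen3
  rw [hpqr] at hinf hmem
  exact hsafe p q r (by omega) hinf hmem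

lemma triple_infix_cons {p q r x : α} {l : List α} (h : [p, q, r] <:+: x :: l) :
    (p = x ∧ ∃ t, l = q :: r :: t) ∨ [p, q, r] <:+: l := by
  rcases List.infix_cons_iff.mp h with h | h
  · left
    obtain ⟨t, ht⟩ := h
    simp only [List.cons_append, List.cons.injEq] at ht
    exact ⟨ht.1, t, ht.2.symm⟩
  · right; exact h

lemma no_triple_infix {p q r : α} {l : List α} (h : [p, q, r] <:+: l)
    (hl : l.length ≤ 2) : False := by
  have := h.sublist.length_le
  simp at this
  omega

end Aux

/-- A partial Steiner triple system in which any two blocks have a point in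
common is sequenceable. -/
theorem sequenceable_of_pairwise_intersecting {α : Type*} [DecidableEq α]
    (V : Finset α) (B : Finset (Finset α)) (hT : IsPSTS V B)
    (hint : ∀ b₁ ∈ B, ∀ b₂ ∈ B, (b₁ ∩ b₂).Nonempty) :
    Sequenceable V B := by
  rcases Finset.eq_empty_or_nonempty B with hB | ⟨b0, hb0⟩
  · refine seq_of_safe hT hint V.nodup_toList V.toList_toFinset ?_
    intro p q r _ _ hmem
    rw [hB] at hmem
    simp at hmem
  obtain ⟨hb0V, hb0c⟩ := hT.1 b0 hb0
  obtain ⟨x, y, z, hxy, hxz, hyz, hb0e⟩ := Finset.card_eq_three.mp hb0c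
  set R := V \ b0 with hRdef
  have hxb0 : x ∈ b0 := by rw [hb0e]; simp
  have hyb0 : y ∈ b0 := by rw [hb0e]; simp
  have hzb0 : z ∈ b0 := by rw [hb0e]; simp
  have hRb0 : ∀ e ∈ R, e ∉ b0 := fun e he => (Finset.mem_sdiff.mp he).2
  have hRV : ∀ e ∈ R, e ∈ V := fun e he => (Finset.mem_sdiff.mp he).1
  have hVc : V.card = R.card + 3 := by
    have h1 : R.card = V.card - 3 := by
      rw [hRdef, Finset.card_sdiff_of_subset hb0V, hb0c]
    have h2 := Finset.card_le_card hb0V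
    rw [hb0c] at h2
    omega
  have hVeq : ∀ e, e ∈ V ↔ e ∈ b0 ∨ e ∈ R := by
    intro e
    constructor
    · intro he
      by_cases h : e ∈ b0
      · exact Or.inl h
      · exact Or.inr (Finset.mem_sdiff.mpr ⟨he, h⟩)
    · rintro (h | h)
      · exact hb0V h
      · exact hRV e h
  -- two fixed points of b0 in a block force the block to be b0
  have hK1 : ∀ s ∈ B, ∀ p q e : α, p ∈ s → q ∈ s → e ∈ s → p ∈ b0 → q ∈ b0 →
      p ≠ q → e ∈ R → False := by
    intro s hs p q e hp hq he hp0 hq0 hpq heR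
    have hsb0 : s = b0 := by
      by_contra hne
      have h1 := hT.2 s hs b0 hb0 hne
      have h2 : 1 < (s ∩ b0).card :=
        Finset.one_lt_card.mpr
          ⟨p, Finset.mem_inter.mpr ⟨hp, hp0⟩, q, Finset.mem_inter.mpr ⟨hq, hq0⟩, hpq⟩
      omega
    rw [hsb0] at he
    exact hRb0 e heR he
  -- a block cannot lie entirely inside R
  have hK2 : ∀ s ∈ B, (∀ e ∈ s, e ∈ R) → False := by
    intro s hs hall
    obtain ⟨t, ht⟩ := hint s hs b0 hb0
    rw [Finset.mem_inter] at ht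
    exact hRb0 t (hall t ht.1) ht.2
  
  by_cases h0 : R.card = 0
  · -- V = b0, any listing works: no proper segment can be a block
    refine seq_of_safe hT hint V.nodup_toList V.toList_toFinset ?_
    intro p q r hlen _ _
    rw [Finset.length_toList] at hlen
    omega
  by_cases h1 : R.card = 1
  · obtain ⟨r0, hr0e⟩ := Finset.card_eq_one.mp h1
    have hr0 : r0 ∈ R := by rw [hr0e]; simp
    have htf : ([x, y, r0, z] : List α).toFinset = V := by
      ext e
      simp only [List.toFinset_cons, List.toFinset_nil, insert_empty_eq,
        Finset.mem_insert, Finset.mem_singleton, hVeq, hb0e, hr0e]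
      tauto
    have hlen : ([x, y, r0, z] : List α).length = V.card := by
      simp [hVc, h1]
    refine seq_of_safe hT hint (nodup_of_toFinset_card (by rw [htf, ← hlen])) htf ?_
    intro p q r _ hinf hmem
    rcases triple_infix_cons hinf with ⟨hpx, t, ht⟩ | h
    · injection ht with hqy ht; injection ht with hrr ht
      exact hK1 _ hmem x y r0 (by simp [hpx]) (by simp [hqy]) (by simp [hrr])
        hxb0 hyb0 hxy hr0
    rcases triple_infix_cons h with ⟨hpy, t, ht⟩ | h
    · injection ht with hqr ht; injection ht with hrz ht
      exact hK1 _ hmem y z r0 (by simp [hpy]) (by simp [hrz]) (by simp [hqr])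
        hyb0 hzb0 hyz hr0
    exact (no_triple_infix h (by simp)).elim
  by_cases h2 : R.card = 2
  · obtain ⟨u, v, huv, hRe⟩ := Finset.card_eq_two.mp h2
    have hu : u ∈ R := by rw [hRe]; simp
    have hv : v ∈ R := by rw [hRe]; simp
    have htf : ([u, x, y, v, z] : List α).toFinset = V := by
      ext e
      simp only [List.toFinset_cons, List.toFinset_nil, insert_empty_eq,
        Finset.mem_insert, Finset.mem_singleton, hVeq, hb0e, hRe]
      tauto
    have hlen : ([u, x, y, v, z] : List α).length = V.card := by
      simp [hVc, h2]
    refine seq_of_safe hT hint (nodup_of_toFinset_card (by rw [htf, ← hlen])) htf ?_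
    intro p q r _ hinf hmem
    rcases triple_infix_cons hinf with ⟨hpu, t, ht⟩ | h
    · injection ht with hqx ht; injection ht with hry ht
      exact hK1 _ hmem x y u (by simp [hqx]) (by simp [hry]) (by simp [hpu])
        hxb0 hyb0 hxy hu
    rcases triple_infix_cons h with ⟨hpx, t, ht⟩ | h
    · injection ht with hqy ht; injection ht with hrv ht
      exact hK1 _ hmem x y v (by simp [hpx]) (by simp [hqy]) (by simp [hrv])
        hxb0 hyb0 hxy hv
    rcases triple_infix_cons h with ⟨hpy, t, ht⟩ | h
    · injection ht with hqv ht; injection ht with hrz ht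
      exact hK1 _ hmem y z v (by simp [hpy]) (by simp [hrz]) (by simp [hqv])
        hyb0 hzb0 hyz hv
    exact (no_triple_infix h (by simp)).elim
  -- main case: R.card ≥ 3
  have h3 : 3 ≤ R.card := by omega
  obtain ⟨a, haR⟩ : R.Nonempty := Finset.card_pos.mp (by omega)
  have hza : z ≠ a := by
    intro h; rw [← h] at haR; exact hRb0 z haR hzb0
  -- choose w
  obtain ⟨w, hwR, hwa, hQ⟩ : ∃ w, w ∈ R ∧ w ≠ a ∧
      ∀ d, d ∈ R → d ≠ w → d ≠ a → ∀ s ∈ B, z ∈ s → a ∈ s → d ∈ s → False := by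
    have herane : (R.erase a).Nonempty := by
      apply Finset.card_pos.mp
      rw [Finset.card_erase_of_mem haR]
      omega
    by_cases hex : ∃ s ∈ B, z ∈ s ∧ a ∈ s
    · obtain ⟨s0, hs0B, hzs0, has0⟩ := hex
      have hs0c : s0.card = 3 := (hT.1 s0 hs0B).2
      have huniq : ∀ s ∈ B, z ∈ s → a ∈ s → s = s0 := by
        intro s hs hzs has
        by_contra hne
        have hle := hT.2 s hs s0 hs0B hne
        have hlt : 1 < (s ∩ s0).card :=
          Finset.one_lt_card.mpr
            ⟨z, Finset.mem_inter.mpr ⟨hzs, hzs0⟩, a,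
              Finset.mem_inter.mpr ⟨has, has0⟩, hza⟩
        omega
      have hsub : ({z, a} : Finset α) ⊆ s0 := by
        intro e he
        simp only [Finset.mem_insert, Finset.mem_singleton] at he
        rcases he with rfl | rfl <;> assumption
      have hsd : (s0 \ {z, a}).card = 1 := by
        rw [Finset.card_sdiff_of_subset hsub, hs0c, Finset.card_pair hza]
      obtain ⟨w0, hw0⟩ := Finset.card_eq_one.mp hsd
      have hw0mem : ∀ e ∈ s0, e = z ∨ e = a ∨ e = w0 := by
        intro e he
        by_cases he1 : e = z
        · exact Or.inl he1
        by_cases he2 : e = a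
        · exact Or.inr (Or.inl he2)
        refine Or.inr (Or.inr ?_)
        have : e ∈ s0 \ ({z, a} : Finset α) := by
          simp [Finset.mem_sdiff, he, he1, he2]
        rw [hw0] at this
        simpa using this
      by_cases hw0R : w0 ∈ R
      · have hw0a : w0 ≠ a := by
          have : w0 ∈ s0 \ ({z, a} : Finset α) := by
            rw [hw0]; simp
          simp only [Finset.mem_sdiff, Finset.mem_insert,
            Finset.mem_singleton] at this
          tauto
        refine ⟨w0, hw0R, hw0a, ?_⟩
        intro d hdR hdw hda s hs hzs has hds
        have hss0 := huniq s hs hzs has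
        rw [hss0] at hds
        rcases hw0mem d hds with rfl | rfl | rfl
        · exact hRb0 d hdR hzb0
        · exact hda rfl
        · exact hdw rfl
      · obtain ⟨w, hw⟩ := herane
        have hwmem := Finset.mem_erase.mp hw
        refine ⟨w, hwmem.2, hwmem.1, ?_⟩
        intro d hdR hdw hda s hs hzs has hds
        have hss0 := huniq s hs hzs has
        rw [hss0] at hds
        rcases hw0mem d hds with rfl | rfl | rfl
        · exact hRb0 d hdR hzb0
        · exact hda rfl
        · exact hw0R hdR
    · obtain ⟨w, hw⟩ := herane
      have hwmem := Finset.mem_erase.mp hw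
      refine ⟨w, hwmem.2, hwmem.1, ?_⟩
      intro d hdR hdw hda s hs hzs has hds
      exact hex ⟨s, hs, hzs, has⟩
  -- the remaining points
  set u : Finset α := (R.erase a).erase w with hudef
  have hwea : w ∈ R.erase a := Finset.mem_erase.mpr ⟨hwa, hwR⟩
  have huc : u.card = R.card - 2 := by
    rw [hudef, Finset.card_erase_of_mem hwea, Finset.card_erase_of_mem haR]
    omega
  have humem : ∀ e, e ∈ u ↔ e ∈ R ∧ e ≠ w ∧ e ≠ a := by
    intro e
    rw [hudef]
    simp only [Finset.mem_erase]
    tauto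
  obtain ⟨c, hcu⟩ : u.Nonempty := Finset.card_pos.mp (by omega)
  obtain ⟨hcR, hcw, hca⟩ := (humem c).mp hcu
  set t' : List α := (u.erase c).toList with ht'def
  have ht'mem : ∀ e ∈ t', e ∈ R ∧ e ≠ w ∧ e ≠ a ∧ e ≠ c := by
    intro e he
    rw [ht'def, Finset.mem_toList, Finset.mem_erase, humem] at he
    tauto
  set l : List α := w :: x :: y :: c :: z :: a :: t' with hldef
  have ht'len : t'.length = R.card - 3 := by
    rw [ht'def, Finset.length_toList, Finset.card_erase_of_mem hcu, huc]
    omega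
  have htf : l.toFinset = V := by
    ext e
    rw [hldef]
    simp only [List.toFinset_cons, Finset.mem_insert, ht'def,
      List.mem_toFinset, Finset.mem_toList, Finset.mem_erase, humem, hVeq, hb0e,
      Finset.mem_insert, Finset.mem_singleton]
    constructor
    · rintro (rfl | rfl | rfl | rfl | rfl | rfl | ⟨h1, h2⟩)
      · exact Or.inr hwR
      · tauto
      · tauto
      · exact Or.inr hcR
      · tauto
      · exact Or.inr haR
      · tauto
    · rintro ((rfl | rfl | rfl) | hR)
      · tauto
      · tauto
      · tauto
      · by_cases e1 : e = w
        · tauto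
        by_cases e2 : e = a
        · tauto
        by_cases e3 : e = c
        · tauto
        exact Or.inr (Or.inr (Or.inr (Or.inr (Or.inr (Or.inr ⟨e3, hR, e1, e2⟩)))))
  have hlen : l.length = V.card := by
    rw [hldef]
    simp only [List.length_cons, ht'len]
    omega
  refine seq_of_safe hT hint (nodup_of_toFinset_card (by rw [htf, ← hlen])) htf ?_
  intro p q r _ hinf hmem
  rw [hldef] at hinf
  rcases triple_infix_cons hinf with ⟨hpw, t, ht⟩ | h
  · injection ht with hqx ht; injection ht with hry ht
    exact hK1 _ hmem x y w (by simp [hqx]) (by simp [hry]) (by simp [hpw])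
      hxb0 hyb0 hxy hwR
  rcases triple_infix_cons h with ⟨hpx, t, ht⟩ | h
  · injection ht with hqy ht; injection ht with hrc ht
    exact hK1 _ hmem x y c (by simp [hpx]) (by simp [hqy]) (by simp [hrc])
      hxb0 hyb0 hxy hcR
  rcases triple_infix_cons h with ⟨hpy, t, ht⟩ | h
  · injection ht with hqc ht; injection ht with hrz ht
    exact hK1 _ hmem y z c (by simp [hpy]) (by simp [hrz]) (by simp [hqc])
      hyb0 hzb0 hyz hcR
  rcases triple_infix_cons h with ⟨hpc, t, ht⟩ | h
  · injection ht with hqz ht; injection ht with hra ht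
    exact hQ c hcR hcw hca _ hmem (by simp [hqz]) (by simp [hra]) (by simp [hpc])
  rcases triple_infix_cons h with ⟨hpz, t, ht⟩ | h
  · injection ht with hqa ht
    have hrt' : r ∈ t' := by rw [ht]; simp
    obtain ⟨hrR, hrw, hra, hrc⟩ := ht'mem r hrt'
    exact hQ r hrR hrw hra _ hmem (by simp [hpz]) (by simp [hqa]) (by simp)
  rcases triple_infix_cons h with ⟨hpa, t, ht⟩ | h
  · have hqt' : q ∈ t' := by rw [ht]; simp
    have hrt' : r ∈ t' := by rw [ht]; simp
    refine hK2 _ hmem ?_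
    intro e he
    simp only [List.toFinset_cons, List.toFinset_nil, insert_empty_eq,
      Finset.mem_insert, Finset.mem_singleton] at he
    rcases he with h | h | h
    · rw [h, hpa]; exact haR
    · rw [h]; exact (ht'mem q hqt').1
    · rw [h]; exact (ht'mem r hrt').1
  · have hsub := h.sublist.subset
    refine hK2 _ hmem ?_
    intro e he
    simp only [List.toFinset_cons, List.toFinset_nil, insert_empty_eq,
      Finset.mem_insert, Finset.mem_singleton] at he
    rcases he with h | h | h <;> rw [h]
    · exact (ht'mem p (hsub (by simp))).1
    · exact (ht'mem q (hsub (by simp))).1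
    · exact (ht'mem r (hsub (by simp))).1
end

section
/- A partial Steiner triple system of order 10 has at most four bad points, i.e., there are at most four points x of V such that V ∖ {x} can be partitioned into three pairwise disjoint blocks. -/
/-- `S` is the union of three pairwise disjoint blocks of `B`. -/
def PartitionsInto3 {α : Type*} [DecidableEq α] (B : Finset (Finset α))
    (S : Finset α) : Prop :=
  ∃ C₁ ∈ B, ∃ C₂ ∈ B, ∃ C₃ ∈ B,
    Disjoint C₁ C₂ ∧ Disjoint C₁ C₃ ∧ Disjoint C₂ C₃ ∧ C₁ ∪ C₂ ∪ C₃ = S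

section AuxLemmas
variable {α : Type*} [DecidableEq α]

/-- Core contradiction assuming D₂ = E₂ and x ∈ E₁. -/
lemma core2 (V : Finset α) (B : Finset (Finset α)) (hT : IsPSTS V B) {x y : α}
    (hx : x ∈ V) (hxy : x ≠ y) {b D₁ D₂ E₁ E₂ : Finset α}
    (hD1 : D₁ ∈ B) (hE1 : E₁ ∈ B)
    (dbE1 : Disjoint b E₁) (dE12 : Disjoint E₁ E₂)
    (hU1 : b ∪ D₁ ∪ D₂ = V.erase x) (hU2 : b ∪ E₁ ∪ E₂ = V.erase y)
    (heq : D₂ = E₂) : False := by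
  subst heq
  have hx' : x ∈ b ∪ E₁ ∪ D₂ := hU2 ▸ Finset.mem_erase.mpr ⟨hxy, hx⟩
  have hxnot : x ∉ b ∪ D₁ ∪ D₂ := hU1 ▸ Finset.notMem_erase x V
  simp only [Finset.mem_union, not_or] at hx' hxnot
  have hxE1 : x ∈ E₁ := by tauto
  have hxD1 : x ∉ D₁ := by tauto
  have hsub : E₁.erase x ⊆ E₁ ∩ D₁ := by
    intro v hv
    have hvx := Finset.ne_of_mem_erase hv
    have hvE1 : v ∈ E₁ := Finset.mem_of_mem_erase hv
    have hvVy : v ∈ V.erase y := hU2 ▸ (by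
      exact Finset.mem_union_left _ (Finset.mem_union_right _ hvE1))
    have hvV : v ∈ V := Finset.mem_of_mem_erase hvVy
    have hvVx : v ∈ b ∪ D₁ ∪ D₂ := hU1 ▸ Finset.mem_erase.mpr ⟨hvx, hvV⟩
    have hvb : v ∉ b := Finset.disjoint_right.1 dbE1 hvE1
    have hvD2 : v ∉ D₂ := Finset.disjoint_left.1 dE12 hvE1
    simp only [Finset.mem_union] at hvVx
    have hvD1 : v ∈ D₁ := by tauto
    exact Finset.mem_inter.mpr ⟨hvE1, hvD1⟩
  have hcard : E₁.card = 3 := (hT.1 E₁ hE1).2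
  have h2 : (E₁.erase x).card = 2 := by rw [Finset.card_erase_of_mem hxE1, hcard]
  have hne : E₁ ≠ D₁ := fun h => hxD1 (h ▸ hxE1)
  have := hT.2 E₁ hE1 D₁ hD1 hne
  have := Finset.card_le_card hsub
  omega

lemma core (V : Finset α) (B : Finset (Finset α)) (hT : IsPSTS V B) {x y : α}
    (hx : x ∈ V) (hxy : x ≠ y) {b D₁ D₂ E₁ E₂ : Finset α}
    (hD1 : D₁ ∈ B) (hD2 : D₂ ∈ B) (hE1 : E₁ ∈ B) (hE2 : E₂ ∈ B)
    (db2 : Disjoint b D₂) (d12 : Disjoint D₁ D₂)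
    (dbE1 : Disjoint b E₁) (dbE2 : Disjoint b E₂) (dE12 : Disjoint E₁ E₂)
    (hU1 : b ∪ D₁ ∪ D₂ = V.erase x) (hU2 : b ∪ E₁ ∪ E₂ = V.erase y)
    (hyD1 : y ∈ D₁) : False := by
  have hU2' : b ∪ E₂ ∪ E₁ = V.erase y := by
    rw [Finset.union_right_comm]; exact hU2
  by_cases h2 : D₂ = E₂
  · exact core2 V B hT hx hxy hD1 hE1 dbE1 dE12 hU1 hU2 h2
  by_cases h1 : D₂ = E₁
  · exact core2 V B hT hx hxy hD1 hE2 dbE2 dE12.symm hU1 hU2' h1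
  -- D₂ ⊆ E₁ ∪ E₂, card 3 ≤ 1 + 1
  have hsub : D₂ ⊆ E₁ ∪ E₂ := by
    intro v hv
    have hvVx : v ∈ V.erase x := hU1 ▸ Finset.mem_union_right _ hv
    have hvV : v ∈ V := Finset.mem_of_mem_erase hvVx
    have hvy : v ≠ y := fun h => (Finset.disjoint_left.1 d12 hyD1) (h ▸ hv)
    have hvVy : v ∈ b ∪ E₁ ∪ E₂ := hU2 ▸ Finset.mem_erase.mpr ⟨hvy, hvV⟩
    have hvb : v ∉ b := Finset.disjoint_right.1 db2 hv
    simp only [Finset.mem_union] at hvVy ⊢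
    tauto
  have heq : D₂ = (D₂ ∩ E₁) ∪ (D₂ ∩ E₂) := by
    rw [← Finset.inter_union_distrib_left, Finset.inter_eq_left.mpr hsub]
  have hle := Finset.card_union_le (D₂ ∩ E₁) (D₂ ∩ E₂)
  have hc1 := hT.2 D₂ hD2 E₁ hE1 h1
  have hc2 := hT.2 D₂ hD2 E₂ hE2 h2
  have hcard : D₂.card = 3 := (hT.1 D₂ hD2).2
  rw [← heq] at hle
  omega

lemma no_shared (V : Finset α) (B : Finset (Finset α)) (hT : IsPSTS V B) {x y : α}
    (hx : x ∈ V) (hy : y ∈ V) (hxy : x ≠ y) {b D₁ D₂ E₁ E₂ : Finset α}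
    (hD1 : D₁ ∈ B) (hD2 : D₂ ∈ B) (hE1 : E₁ ∈ B) (hE2 : E₂ ∈ B)
    (db1 : Disjoint b D₁) (db2 : Disjoint b D₂) (d12 : Disjoint D₁ D₂)
    (dbE1 : Disjoint b E₁) (dbE2 : Disjoint b E₂) (dE12 : Disjoint E₁ E₂)
    (hU1 : b ∪ D₁ ∪ D₂ = V.erase x) (hU2 : b ∪ E₁ ∪ E₂ = V.erase y) : False := by
  have hy' : y ∈ b ∪ D₁ ∪ D₂ := hU1 ▸ Finset.mem_erase.mpr ⟨fun h => hxy h.symm, hy⟩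
  have hyb : y ∉ b ∪ E₁ ∪ E₂ := hU2 ▸ Finset.notMem_erase y V
  simp only [Finset.mem_union, not_or] at hy' hyb
  have hyD : y ∈ D₁ ∨ y ∈ D₂ := by tauto
  rcases hyD with h | h
  · exact core V B hT hx hxy hD1 hD2 hE1 hE2 db2 d12 dbE1 dbE2 dE12 hU1 hU2 h
  · have hU1' : b ∪ D₂ ∪ D₁ = V.erase x := by rw [Finset.union_right_comm]; exact hU1
    exact core V B hT hx hxy hD2 hD1 hE1 hE2 db1 d12.symm dbE1 dbE2 dE12 hU1' hU2 h

/-- Pick out a block from a 3-partition: the other two blocks. -/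
lemma extract {B : Finset (Finset α)} {C₁ C₂ C₃ : Finset α}
    (h1 : C₁ ∈ B) (h2 : C₂ ∈ B) (h3 : C₃ ∈ B)
    (d12 : Disjoint C₁ C₂) (d13 : Disjoint C₁ C₃) (d23 : Disjoint C₂ C₃)
    {b : Finset α} (hb : b = C₁ ∨ b = C₂ ∨ b = C₃) :
    ∃ D₁ D₂, D₁ ∈ B ∧ D₂ ∈ B ∧ Disjoint b D₁ ∧ Disjoint b D₂ ∧ Disjoint D₁ D₂ ∧
      b ∪ D₁ ∪ D₂ = C₁ ∪ C₂ ∪ C₃ := by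
  rcases hb with rfl | rfl | rfl
  · exact ⟨C₂, C₃, h2, h3, d12, d13, d23, rfl⟩
  · exact ⟨C₁, C₃, h1, h3, d12.symm, d23, d13, by
      ext z; simp only [Finset.mem_union]; tauto⟩
  · exact ⟨C₁, C₂, h1, h2, d13.symm, d23.symm, d12, by
      ext z; simp only [Finset.mem_union]; tauto⟩

end AuxLemmas

/-- A partial Steiner triple system of order 10 has at most four bad points,
i.e. at most four points `x ∈ V` such that `V \ {x}` can be partitioned into
three pairwise disjoint blocks. -/
theorem at_most_four_bad_points {α : Type*} [DecidableEq α]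
    (V : Finset α) (B : Finset (Finset α)) (hT : IsPSTS V B)
    (h10 : V.card = 10) :
    ∀ S ⊆ V, (∀ x ∈ S, PartitionsInto3 B (V.erase x)) → S.card ≤ 4 := by
  classical
  intro S hSV hS
  -- total choice functions
  have h' : ∀ x : α, ∃ C₁ C₂ C₃ : Finset α, x ∈ S →
      C₁ ∈ B ∧ C₂ ∈ B ∧ C₃ ∈ B ∧ Disjoint C₁ C₂ ∧ Disjoint C₁ C₃ ∧ Disjoint C₂ C₃ ∧
      C₁ ∪ C₂ ∪ C₃ = V.erase x := by
    intro x
    by_cases hx : x ∈ S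
    · obtain ⟨C₁, h1, C₂, h2, C₃, h3, d12, d13, d23, hU⟩ := hS x hx
      exact ⟨C₁, C₂, C₃, fun _ => ⟨h1, h2, h3, d12, d13, d23, hU⟩⟩
    · exact ⟨∅, ∅, ∅, fun h => absurd h hx⟩
  choose f₁ f₂ f₃ hf using h'
  set F : α → Finset (Finset α) := fun x => {f₁ x, f₂ x, f₃ x} with hF
  set T : Finset (Finset α) := S.biUnion F with hTdef
  -- every member of F x is in B with card 3 (for x ∈ S)
  have hmemB : ∀ x ∈ S, ∀ b ∈ F x, b ∈ B := by
    intro x hx b hb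
    obtain ⟨h1, h2, h3, -, -, -, -⟩ := hf x hx
    simp only [hF, Finset.mem_insert, Finset.mem_singleton] at hb
    rcases hb with rfl | rfl | rfl <;> assumption
  have hTB : ∀ b ∈ T, b ∈ B := by
    intro b hb
    obtain ⟨x, hx, hbx⟩ := Finset.mem_biUnion.1 hb
    exact hmemB x hx b hbx
  -- across distinct bad points, the partitions are disjoint
  have hdisjF : ∀ x ∈ S, ∀ y ∈ S, x ≠ y → Disjoint (F x) (F y) := by
    intro x hx y hy hxy
    rw [Finset.disjoint_left]
    intro b hbx hby
    obtain ⟨h1, h2, h3, d12, d13, d23, hU1⟩ := hf x hx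
    obtain ⟨g1, g2, g3, e12, e13, e23, hU2⟩ := hf y hy
    simp only [hF, Finset.mem_insert, Finset.mem_singleton] at hbx hby
    obtain ⟨D₁, D₂, hD1, hD2, db1, db2, d12', hUD⟩ := extract h1 h2 h3 d12 d13 d23 hbx
    obtain ⟨E₁, E₂, hE1, hE2, eb1, eb2, e12', hUE⟩ := extract g1 g2 g3 e12 e13 e23 hby
    rw [hU1] at hUD; rw [hU2] at hUE
    exact no_shared V B hT (hSV hx) (hSV hy) hxy hD1 hD2 hE1 hE2 db1 db2 d12'
      eb1 eb2 e12' hUD hUE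
  -- each F x has card 3
  have hFcard : ∀ x ∈ S, (F x).card = 3 := by
    intro x hx
    obtain ⟨h1, h2, h3, d12, d13, d23, -⟩ := hf x hx
    have c1 : (f₁ x).card = 3 := (hT.1 _ h1).2
    have c2 : (f₂ x).card = 3 := (hT.1 _ h2).2
    have c3 : (f₃ x).card = 3 := (hT.1 _ h3).2
    have n12 : f₁ x ≠ f₂ x := by
      intro h; rw [h, disjoint_self] at d12
      rw [d12] at c2; simp at c2
    have n13 : f₁ x ≠ f₃ x := by
      intro h; rw [h, disjoint_self] at d13
      rw [d13] at c3; simp at c3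
    have n23 : f₂ x ≠ f₃ x := by
      intro h; rw [h, disjoint_self] at d23
      rw [d23] at c3; simp at c3
    simp [hF, Finset.card_insert_of_notMem, n12, n13, n23]
  -- |T| = 3 |S|
  have hTcard : T.card = 3 * S.card := by
    rw [hTdef, Finset.card_biUnion hdisjF]
    rw [Finset.sum_congr rfl hFcard, Finset.sum_const, smul_eq_mul, mul_comm]
  -- degree bound
  have hdeg : ∀ v ∈ V, (T.filter (fun b => v ∈ b)).card ≤ 4 := by
    intro v hv
    set T' := T.filter (fun b => v ∈ b) with hT'
    have hT'B : ∀ b ∈ T', b ∈ B ∧ v ∈ b := fun b hb =>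
      ⟨hTB b (Finset.mem_of_mem_filter b hb), (Finset.mem_filter.1 hb).2⟩
    have hpd : ∀ b₁ ∈ T', ∀ b₂ ∈ T', b₁ ≠ b₂ →
        Disjoint (b₁.erase v) (b₂.erase v) := by
      intro b₁ hb₁ b₂ hb₂ hne
      rw [Finset.disjoint_left]
      intro w hw1 hw2
      have hwv : w ≠ v := Finset.ne_of_mem_erase hw1
      have hsub : ({v, w} : Finset α) ⊆ b₁ ∩ b₂ := by
        intro z hz
        simp only [Finset.mem_insert, Finset.mem_singleton] at hz
        rcases hz with rfl | rfl
        · exact Finset.mem_inter.mpr ⟨(hT'B b₁ hb₁).2, (hT'B b₂ hb₂).2⟩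
        · exact Finset.mem_inter.mpr ⟨Finset.mem_of_mem_erase hw1,
            Finset.mem_of_mem_erase hw2⟩
      have h2 : ({v, w} : Finset α).card = 2 := Finset.card_pair (Ne.symm hwv)
      have := Finset.card_le_card hsub
      have := hT.2 b₁ (hT'B b₁ hb₁).1 b₂ (hT'B b₂ hb₂).1 hne
      omega
    have hbsub : T'.biUnion (fun b => b.erase v) ⊆ V.erase v := by
      intro w hw
      obtain ⟨b, hb, hwb⟩ := Finset.mem_biUnion.1 hw
      exact Finset.mem_erase.mpr ⟨Finset.ne_of_mem_erase hwb,
        (hT.1 b (hT'B b hb).1).1 (Finset.mem_of_mem_erase hwb)⟩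
    have hbcard : (T'.biUnion (fun b => b.erase v)).card = 2 * T'.card := by
      rw [Finset.card_biUnion hpd]
      have : ∀ b ∈ T', (b.erase v).card = 2 := by
        intro b hb
        rw [Finset.card_erase_of_mem (hT'B b hb).2, (hT.1 b (hT'B b hb).1).2]
      rw [Finset.sum_congr rfl this, Finset.sum_const, smul_eq_mul, mul_comm]
    have h9 : (V.erase v).card = 9 := by
      rw [Finset.card_erase_of_mem hv, h10]
    have := Finset.card_le_card hbsub
    omega
  -- double counting
  have hdc : ∑ b ∈ T, b.card = ∑ v ∈ V, (T.filter (fun b => v ∈ b)).card := by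
    have step1 : ∀ b ∈ T, b.card = ∑ v ∈ V, if v ∈ b then 1 else 0 := by
      intro b hb
      rw [← Finset.card_filter]
      congr 1
      rw [Finset.filter_mem_eq_inter, Finset.inter_eq_right.mpr (hT.1 b (hTB b hb)).1]
    rw [Finset.sum_congr rfl step1, Finset.sum_comm]
    exact Finset.sum_congr rfl fun v _ => (Finset.card_filter _ _).symm
  have hsum3 : ∑ b ∈ T, b.card = 3 * T.card := by
    have : ∀ b ∈ T, b.card = 3 := fun b hb => (hT.1 b (hTB b hb)).2
    rw [Finset.sum_congr rfl this, Finset.sum_const, smul_eq_mul, mul_comm]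
  have hbound : ∑ v ∈ V, (T.filter (fun b => v ∈ b)).card ≤ 40 := by
    calc ∑ v ∈ V, (T.filter (fun b => v ∈ b)).card ≤ ∑ v ∈ V, 4 :=
          Finset.sum_le_sum hdeg
      _ = 40 := by rw [Finset.sum_const, smul_eq_mul, h10]
  omega
end

section
/- Let A₁ and A₂ be disjoint blocks in a partial Steiner triple system on point set V, and let V' = V ∖ (A₁ ∪ A₂). Let α, β, γ, x be four distinct points of V' such that no block containing x is a subset of {α, β, γ, x}. Then among the three 9-element sets of the form A₁ ∪ A₂ ∪ {x, δ, ε}, where {δ, ε} ranges over the three 2-element subsets of {α, β, γ}, at most two can be partitioned into three pairwise disjoint blocks. -/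
set_option maxHeartbeats 1600000

section PSTS
variable {α : Type*} [DecidableEq α] {V : Finset α} {B : Finset (Finset α)}
  {A₁ A₂ : Finset α}

lemma card_triple_le (x δ ε : α) : ({x, δ, ε} : Finset α).card ≤ 3 := by
  have h1 := Finset.card_insert_le x ({δ, ε} : Finset α)
  have h2 := Finset.card_insert_le δ ({ε} : Finset α)
  have h3 : ({ε} : Finset α).card = 1 := Finset.card_singleton ε
  omega

lemma not_block_eq (hT : IsPSTS V B)
    (h₂ : A₂ ∈ B) (hd : Disjoint A₁ A₂)
    {x δ ε : α}
    (hno : ({x, δ, ε} : Finset α) ∉ B)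
    {C₁ C₂ C₃ : Finset α} (hC₂ : C₂ ∈ B) (hC₃ : C₃ ∈ B)
    (h12 : Disjoint C₁ C₂) (h13 : Disjoint C₁ C₃) (h23 : Disjoint C₂ C₃)
    (hU : C₁ ∪ C₂ ∪ C₃ = A₁ ∪ A₂ ∪ {x, δ, ε}) : C₁ ≠ A₁ := by
  intro h
  rw [h] at h12 h13 hU
  have h3 : A₂.card = 3 := (hT.1 _ h₂).2
  have hA₂sub : A₂ ⊆ C₂ ∪ C₃ := by
    intro z hz
    have hz' : z ∈ A₁ ∪ C₂ ∪ C₃ := by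
      rw [hU]; exact Finset.mem_union_left _ (Finset.mem_union_right _ hz)
    simp only [Finset.mem_union] at hz' ⊢
    rcases hz' with (h' | h') | h'
    · exact absurd h' (Finset.disjoint_right.mp hd hz)
    · exact Or.inl h'
    · exact Or.inr h'
  have hsplit : A₂ = (A₂ ∩ C₂) ∪ (A₂ ∩ C₃) := by
    rw [← Finset.inter_union_distrib_left, Finset.inter_eq_left.mpr hA₂sub]
  have hcardle : A₂.card ≤ (A₂ ∩ C₂).card + (A₂ ∩ C₃).card := by
    conv_lhs => rw [hsplit]
    exact Finset.card_union_le _ _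
  have hcard2 : ∀ C ∈ B, 2 ≤ (A₂ ∩ C).card → C = A₂ := by
    intro C hC h2
    by_contra hne
    have := hT.2 A₂ h₂ C hC (fun h => hne h.symm)
    omega
  have hcases : 2 ≤ (A₂ ∩ C₂).card ∨ 2 ≤ (A₂ ∩ C₃).card := by omega
  rcases hcases with hc | hc
  · have hC₂A : C₂ = A₂ := hcard2 _ hC₂ hc
    have hsub : C₃ ⊆ {x, δ, ε} := by
      intro z hz
      have hz' : z ∈ A₁ ∪ A₂ ∪ {x, δ, ε} := by
        rw [← hU]; exact Finset.mem_union_right _ hz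
      simp only [Finset.mem_union] at hz'
      rcases hz' with (h' | h') | h'
      · exact absurd hz (Finset.disjoint_left.mp h13 h')
      · rw [hC₂A] at h23
        exact absurd hz (Finset.disjoint_left.mp h23 h')
      · exact h'
    have hc3 : C₃.card = 3 := (hT.1 _ hC₃).2
    have hle := card_triple_le (α := α) x δ ε
    have : C₃ = {x, δ, ε} := Finset.eq_of_subset_of_card_le hsub (by omega)
    exact hno (this ▸ hC₃)
  · have hC₃A : C₃ = A₂ := hcard2 _ hC₃ hc
    have hsub : C₂ ⊆ {x, δ, ε} := by
      intro z hz
      have hz' : z ∈ A₁ ∪ A₂ ∪ {x, δ, ε} := by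
        rw [← hU]
        exact Finset.mem_union_left _ (Finset.mem_union_right _ hz)
      simp only [Finset.mem_union] at hz'
      rcases hz' with (h' | h') | h'
      · exact absurd hz (Finset.disjoint_left.mp h12 h')
      · rw [hC₃A] at h23
        exact absurd hz (Finset.disjoint_right.mp h23 h')
      · exact h'
    have hc2 : C₂.card = 3 := (hT.1 _ hC₂).2
    have hle := card_triple_le (α := α) x δ ε
    have : C₂ = {x, δ, ε} := Finset.eq_of_subset_of_card_le hsub (by omega)
    exact hno (this ▸ hC₂)

lemma struct (hT : IsPSTS V B) (h₁ : A₁ ∈ B) (h₂ : A₂ ∈ B) (hd : Disjoint A₁ A₂)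
    {x δ ε : α} (hxA : x ∉ A₁ ∪ A₂) (hδA : δ ∉ A₁ ∪ A₂) (hεA : ε ∉ A₁ ∪ A₂)
    (hxδ : x ≠ δ) (hxε : x ≠ ε) (hδε : δ ≠ ε)
    (hno : ({x, δ, ε} : Finset α) ∉ B)
    (hP : PartitionsInto3 B (A₁ ∪ A₂ ∪ {x, δ, ε})) :
    ∃ u₁ v₁ u₂ v₂ u₃ v₃ : α,
      u₁ ∈ A₁ ∧ u₂ ∈ A₁ ∧ u₃ ∈ A₁ ∧ v₁ ∈ A₂ ∧ v₂ ∈ A₂ ∧ v₃ ∈ A₂ ∧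
      u₁ ≠ u₂ ∧ u₁ ≠ u₃ ∧ u₂ ≠ u₃ ∧ v₁ ≠ v₂ ∧ v₁ ≠ v₃ ∧ v₂ ≠ v₃ ∧
      ({x, u₁, v₁} : Finset α) ∈ B ∧ ({δ, u₂, v₂} : Finset α) ∈ B ∧
      ({ε, u₃, v₃} : Finset α) ∈ B := by
  obtain ⟨C₁, hC₁, C₂, hC₂, C₃, hC₃, h12, h13, h23, hU⟩ := hP
  have hUm : ∀ z : α, (z ∈ C₁ ∨ z ∈ C₂ ∨ z ∈ C₃) ↔
      (z ∈ A₁ ∨ z ∈ A₂ ∨ z ∈ ({x, δ, ε} : Finset α)) := by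
    intro z
    have := Finset.ext_iff.mp hU z
    simp only [Finset.mem_union] at this
    tauto
  have hU213 : C₂ ∪ C₁ ∪ C₃ = A₁ ∪ A₂ ∪ {x, δ, ε} := by
    ext z; simp only [Finset.mem_union]; have := hUm z; tauto
  have hU312 : C₃ ∪ C₁ ∪ C₂ = A₁ ∪ A₂ ∪ {x, δ, ε} := by
    ext z; simp only [Finset.mem_union]; have := hUm z; tauto
  have hUs : C₁ ∪ C₂ ∪ C₃ = A₂ ∪ A₁ ∪ {x, δ, ε} := by
    ext z; simp only [Finset.mem_union]; have := hUm z; tauto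
  have hUs213 : C₂ ∪ C₁ ∪ C₃ = A₂ ∪ A₁ ∪ {x, δ, ε} := by
    ext z; simp only [Finset.mem_union]; have := hUm z; tauto
  have hUs312 : C₃ ∪ C₁ ∪ C₂ = A₂ ∪ A₁ ∪ {x, δ, ε} := by
    ext z; simp only [Finset.mem_union]; have := hUm z; tauto
  have hn1 : C₁ ≠ A₁ := not_block_eq hT h₂ hd hno hC₂ hC₃ h12 h13 h23 hU
  have hn2 : C₂ ≠ A₁ := not_block_eq hT h₂ hd hno hC₁ hC₃ h12.symm h23 h13 hU213
  have hn3 : C₃ ≠ A₁ := not_block_eq hT h₂ hd hno hC₁ hC₂ h13.symm h23.symm h12 hU312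
  have hm1 : C₁ ≠ A₂ := not_block_eq hT h₁ hd.symm hno hC₂ hC₃ h12 h13 h23 hUs
  have hm2 : C₂ ≠ A₂ := not_block_eq hT h₁ hd.symm hno hC₁ hC₃ h12.symm h23 h13 hUs213
  have hm3 : C₃ ≠ A₂ := not_block_eq hT h₁ hd.symm hno hC₁ hC₂ h13.symm h23.symm h12 hUs312
  have cA1 : A₁.card = 3 := (hT.1 _ h₁).2
  have cA2 : A₂.card = 3 := (hT.1 _ h₂).2
  -- intersection cards with A₁
  have hinter : ∀ (A : Finset α), A ∈ B → A.card = 3 → C₁ ≠ A → C₂ ≠ A → C₃ ≠ A →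
      (A ⊆ C₁ ∪ C₂ ∪ C₃) →
      (A ∩ C₁).card = 1 ∧ (A ∩ C₂).card = 1 ∧ (A ∩ C₃).card = 1 := by
    intro A hA hcA k1 k2 k3 hsubA
    have hsplit : A = (A ∩ C₁) ∪ (A ∩ C₂) ∪ (A ∩ C₃) := by
      rw [← Finset.inter_union_distrib_left, ← Finset.inter_union_distrib_left,
        Finset.inter_eq_left.mpr hsubA]
    have b1 : (A ∩ C₁).card ≤ 1 := hT.2 A hA C₁ hC₁ (fun h => k1 h.symm)
    have b2 : (A ∩ C₂).card ≤ 1 := hT.2 A hA C₂ hC₂ (fun h => k2 h.symm)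
    have b3 : (A ∩ C₃).card ≤ 1 := hT.2 A hA C₃ hC₃ (fun h => k3 h.symm)
    have hcard : A.card ≤ (A ∩ C₁ ∪ A ∩ C₂).card + (A ∩ C₃).card := by
      conv_lhs => rw [hsplit]
      exact Finset.card_union_le _ _
    have hcard2 := Finset.card_union_le (A ∩ C₁) (A ∩ C₂)
    omega
  have hsubA1 : A₁ ⊆ C₁ ∪ C₂ ∪ C₃ := by
    intro z hz
    simp only [Finset.mem_union]
    rw [show ((z ∈ C₁ ∨ z ∈ C₂) ∨ z ∈ C₃) ↔ (z ∈ C₁ ∨ z ∈ C₂ ∨ z ∈ C₃) by tauto, hUm z]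
    tauto
  have hsubA2 : A₂ ⊆ C₁ ∪ C₂ ∪ C₃ := by
    intro z hz
    simp only [Finset.mem_union]
    rw [show ((z ∈ C₁ ∨ z ∈ C₂) ∨ z ∈ C₃) ↔ (z ∈ C₁ ∨ z ∈ C₂ ∨ z ∈ C₃) by tauto, hUm z]
    tauto
  obtain ⟨a11, a12, a13⟩ := hinter A₁ h₁ cA1 hn1.symm.symm hn2 hn3 hsubA1
  obtain ⟨a21, a22, a23⟩ := hinter A₂ h₂ cA2 hm1 hm2 hm3 hsubA2
  -- shape of each block
  have hshape : ∀ {C : Finset α}, C ∈ B → C ⊆ A₁ ∪ A₂ ∪ {x, δ, ε} →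
      (A₁ ∩ C).card = 1 → (A₂ ∩ C).card = 1 →
      ∃ y u v, u ∈ A₁ ∧ v ∈ A₂ ∧ y ∉ A₁ ∪ A₂ ∧ C = {y, u, v} := by
    intro C hC hCsub hc1 hc2
    obtain ⟨u, hu⟩ := Finset.card_eq_one.mp hc1
    obtain ⟨v, hv⟩ := Finset.card_eq_one.mp hc2
    have hum : u ∈ A₁ ∩ C := hu ▸ Finset.mem_singleton_self u
    have hvm : v ∈ A₂ ∩ C := hv ▸ Finset.mem_singleton_self v
    have huA : u ∈ A₁ := (Finset.mem_inter.mp hum).1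
    have huC : u ∈ C := (Finset.mem_inter.mp hum).2
    have hvA : v ∈ A₂ := (Finset.mem_inter.mp hvm).1
    have hvC : v ∈ C := (Finset.mem_inter.mp hvm).2
    have hcC : C.card = 3 := (hT.1 _ hC).2
    have hex : ∃ y ∈ C, y ∉ A₁ ∪ A₂ := by
      by_contra hco
      push_neg at hco
      have hCeq : C = (A₁ ∩ C) ∪ (A₂ ∩ C) := by
        ext z
        simp only [Finset.mem_union, Finset.mem_inter]
        constructor
        · intro hz
          have := hco z hz
          simp only [Finset.mem_union] at this
          tauto
        · tauto
      have hle : C.card ≤ (A₁ ∩ C).card + (A₂ ∩ C).card := by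
        conv_lhs => rw [hCeq]
        exact Finset.card_union_le _ _
      omega
    obtain ⟨y, hyC, hyA⟩ := hex
    have hyu : y ≠ u := fun h => hyA (Finset.mem_union_left _ (h ▸ huA))
    have hyv : y ≠ v := fun h => hyA (Finset.mem_union_right _ (h ▸ hvA))
    have huv : u ≠ v := fun h => Finset.disjoint_left.mp hd huA (h ▸ hvA)
    have hsub' : ({y, u, v} : Finset α) ⊆ C := by
      intro z hz
      simp only [Finset.mem_insert, Finset.mem_singleton] at hz
      rcases hz with rfl | rfl | rfl
      exacts [hyC, huC, hvC]
    have hc3 : ({y, u, v} : Finset α).card = 3 := by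
      rw [Finset.card_insert_of_notMem (by simp [hyu, hyv]),
        Finset.card_insert_of_notMem (by simp [huv]), Finset.card_singleton]
    have hCeq : C = {y, u, v} := (Finset.eq_of_subset_of_card_le hsub' (by omega)).symm
    exact ⟨y, u, v, huA, hvA, hyA, hCeq⟩
  have s1 : C₁ ⊆ A₁ ∪ A₂ ∪ {x, δ, ε} := by
    rw [← hU]; exact (Finset.subset_union_left).trans Finset.subset_union_left
  have s2 : C₂ ⊆ A₁ ∪ A₂ ∪ {x, δ, ε} := by
    rw [← hU]; exact (Finset.subset_union_right).trans Finset.subset_union_left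
  have s3 : C₃ ⊆ A₁ ∪ A₂ ∪ {x, δ, ε} := by
    rw [← hU]; exact Finset.subset_union_right
  obtain ⟨y₁, u₁, v₁, hu₁, hv₁, hy₁A, hE₁⟩ := hshape hC₁ s1 a11 a21
  obtain ⟨y₂, u₂, v₂, hu₂, hv₂, hy₂A, hE₂⟩ := hshape hC₂ s2 a12 a22
  obtain ⟨y₃, u₃, v₃, hu₃, hv₃, hy₃A, hE₃⟩ := hshape hC₃ s3 a13 a23
  subst hE₁ hE₂ hE₃
  have hmem : ∀ w : α, w ∉ A₁ ∪ A₂ → w ∈ ({x, δ, ε} : Finset α) →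
      (w = y₁ ∨ w = y₂ ∨ w = y₃) := by
    intro w hwA hw3
    have hw : w ∈ ({y₁, u₁, v₁} : Finset α) ∪ {y₂, u₂, v₂} ∪ {y₃, u₃, v₃} := by
      rw [hU]; exact Finset.mem_union_right _ hw3
    simp only [Finset.mem_union, Finset.mem_insert, Finset.mem_singleton] at hw
    have hA1 : ∀ {u' : α}, u' ∈ A₁ → w ≠ u' :=
      fun h hh => hwA (Finset.mem_union_left _ (hh ▸ h))
    have hA2 : ∀ {v' : α}, v' ∈ A₂ → w ≠ v' :=
      fun h hh => hwA (Finset.mem_union_right _ (hh ▸ h))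
    rcases hw with ((h | h | h) | (h | h | h)) | (h | h | h)
    exacts [Or.inl h, absurd h (hA1 hu₁), absurd h (hA2 hv₁),
      Or.inr (Or.inl h), absurd h (hA1 hu₂), absurd h (hA2 hv₂),
      Or.inr (Or.inr h), absurd h (hA1 hu₃), absurd h (hA2 hv₃)]
  have hxw := hmem x hxA (by simp)
  have hδw := hmem δ hδA (by simp)
  have hεw := hmem ε hεA (by simp)
  clear hUm hU213 hU312 hUs hUs213 hUs312 hU hmem
  have final : ∀ (a₁ b₁ : α), a₁ ∈ A₁ → b₁ ∈ A₂ → ({x, a₁, b₁} : Finset α) ∈ B →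
      ∀ (a₂ b₂ : α), a₂ ∈ A₁ → b₂ ∈ A₂ → ({δ, a₂, b₂} : Finset α) ∈ B →
      ∀ (a₃ b₃ : α), a₃ ∈ A₁ → b₃ ∈ A₂ → ({ε, a₃, b₃} : Finset α) ∈ B →
      Disjoint ({x, a₁, b₁} : Finset α) {δ, a₂, b₂} →
      Disjoint ({x, a₁, b₁} : Finset α) {ε, a₃, b₃} →
      Disjoint ({δ, a₂, b₂} : Finset α) {ε, a₃, b₃} →
      ∃ u₁ v₁ u₂ v₂ u₃ v₃ : α,
        u₁ ∈ A₁ ∧ u₂ ∈ A₁ ∧ u₃ ∈ A₁ ∧ v₁ ∈ A₂ ∧ v₂ ∈ A₂ ∧ v₃ ∈ A₂ ∧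
        u₁ ≠ u₂ ∧ u₁ ≠ u₃ ∧ u₂ ≠ u₃ ∧ v₁ ≠ v₂ ∧ v₁ ≠ v₃ ∧ v₂ ≠ v₃ ∧
        ({x, u₁, v₁} : Finset α) ∈ B ∧ ({δ, u₂, v₂} : Finset α) ∈ B ∧
        ({ε, u₃, v₃} : Finset α) ∈ B := by
    intro a₁ b₁ ha₁ hb₁ hB₁ a₂ b₂ ha₂ hb₂ hB₂ a₃ b₃ ha₃ hb₃ hB₃ d₁₂ d₁₃ d₂₃
    refine ⟨a₁, b₁, a₂, b₂, a₃, b₃, ha₁, ha₂, ha₃, hb₁, hb₂, hb₃, ?_, ?_, ?_, ?_, ?_, ?_,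
      hB₁, hB₂, hB₃⟩
    · intro h
      have hni : a₁ ∉ ({δ, a₂, b₂} : Finset α) := Finset.disjoint_left.mp d₁₂ (by simp)
      exact hni (by simp [h])
    · intro h
      have hni : a₁ ∉ ({ε, a₃, b₃} : Finset α) := Finset.disjoint_left.mp d₁₃ (by simp)
      exact hni (by simp [h])
    · intro h
      have hni : a₂ ∉ ({ε, a₃, b₃} : Finset α) := Finset.disjoint_left.mp d₂₃ (by simp)
      exact hni (by simp [h])
    · intro h
      have hni : b₁ ∉ ({δ, a₂, b₂} : Finset α) := Finset.disjoint_left.mp d₁₂ (by simp)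
      exact hni (by simp [h])
    · intro h
      have hni : b₁ ∉ ({ε, a₃, b₃} : Finset α) := Finset.disjoint_left.mp d₁₃ (by simp)
      exact hni (by simp [h])
    · intro h
      have hni : b₂ ∉ ({ε, a₃, b₃} : Finset α) := Finset.disjoint_left.mp d₂₃ (by simp)
      exact hni (by simp [h])
  rcases hxw with rfl | rfl | rfl <;> rcases hδw with rfl | rfl | rfl <;>
    rcases hεw with rfl | rfl | rfl <;>
    first
    | exact absurd rfl hxδ
    | exact absurd rfl hxε
    | exact absurd rfl hδε
    | exact final u₁ v₁ hu₁ hv₁ hC₁ u₂ v₂ hu₂ hv₂ hC₂ u₃ v₃ hu₃ hv₃ hC₃ h12 h13 h23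
    | exact final u₁ v₁ hu₁ hv₁ hC₁ u₃ v₃ hu₃ hv₃ hC₃ u₂ v₂ hu₂ hv₂ hC₂ h13 h12 h23.symm
    | exact final u₂ v₂ hu₂ hv₂ hC₂ u₁ v₁ hu₁ hv₁ hC₁ u₃ v₃ hu₃ hv₃ hC₃ h12.symm h23 h13
    | exact final u₂ v₂ hu₂ hv₂ hC₂ u₃ v₃ hu₃ hv₃ hC₃ u₁ v₁ hu₁ hv₁ hC₁ h23 h12.symm h13.symm
    | exact final u₃ v₃ hu₃ hv₃ hC₃ u₁ v₁ hu₁ hv₁ hC₁ u₂ v₂ hu₂ hv₂ hC₂ h13.symm h23.symm h12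
    | exact final u₃ v₃ hu₃ hv₃ hC₃ u₂ v₂ hu₂ hv₂ hC₂ u₁ v₁ hu₁ hv₁ hC₁ h23.symm h13.symm h12.symm

end PSTS



abbrev SL (a b c d : Fin 3) : Prop := (a = b ∧ c = d) ∨ (a ≠ b ∧ c ≠ d)
abbrev DF (a b c d : Fin 3) : Prop := ¬ (a = b ∧ c = d)

lemma vecInj {u₁ u₂ u₃ : Fin 3} (h12 : u₁ ≠ u₂) (h13 : u₁ ≠ u₃) (h23 : u₂ ≠ u₃) :
    Function.Injective ![u₁, u₂, u₃] := by
  intro i j h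
  fin_cases i <;> fin_cases j <;> simp_all

section PSTS
variable {α : Type*} [DecidableEq α] {V : Finset α} {B : Finset (Finset α)}
  {A₁ A₂ : Finset α}

lemma blocks_same_label (hT : IsPSTS V B) (hd : Disjoint A₁ A₂)
    {y u v u' v' : α} (hy : y ∉ A₁ ∪ A₂) (hu : u ∈ A₁) (hu' : u' ∈ A₁)
    (hv : v ∈ A₂) (hv' : v' ∈ A₂)
    (hb : ({y, u, v} : Finset α) ∈ B) (hb' : ({y, u', v'} : Finset α) ∈ B) :
    (u = u' ∧ v = v') ∨ (u ≠ u' ∧ v ≠ v') := by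
  have hyA₁ : y ∉ A₁ := fun h => hy (Finset.mem_union_left _ h)
  have hyA₂ : y ∉ A₂ := fun h => hy (Finset.mem_union_right _ h)
  by_cases he : ({y, u, v} : Finset α) = ({y, u', v'} : Finset α)
  · left
    have hu2 : u ∈ ({y, u', v'} : Finset α) := he ▸ (by simp)
    have hv2 : v ∈ ({y, u', v'} : Finset α) := he ▸ (by simp)
    simp only [Finset.mem_insert, Finset.mem_singleton] at hu2 hv2
    constructor
    · rcases hu2 with h | h | h
      · exact absurd (h ▸ hu) hyA₁
      · exact h
      · exact absurd hu (Finset.disjoint_right.mp hd (h ▸ hv'))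
    · rcases hv2 with h | h | h
      · exact absurd (h ▸ hv) hyA₂
      · exact absurd hv (Finset.disjoint_left.mp hd (h ▸ hu'))
      · exact h
  · right
    have hcard := hT.2 _ hb _ hb' he
    constructor
    · intro h
      have hsub : ({y, u} : Finset α) ⊆ {y, u, v} ∩ {y, u', v'} := by
        intro z hz; simp only [Finset.mem_insert, Finset.mem_singleton] at hz
        rcases hz with rfl | rfl <;> simp [h]
      have h2 : ({y, u} : Finset α).card = 2 :=
        Finset.card_pair (ne_of_mem_of_not_mem hu hyA₁).symm
      have := Finset.card_le_card hsub
      omega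
    · intro h
      have hsub : ({y, v} : Finset α) ⊆ {y, u, v} ∩ {y, u', v'} := by
        intro z hz; simp only [Finset.mem_insert, Finset.mem_singleton] at hz
        rcases hz with rfl | rfl <;> simp [h]
      have h2 : ({y, v} : Finset α).card = 2 :=
        Finset.card_pair (ne_of_mem_of_not_mem hv hyA₂).symm
      have := Finset.card_le_card hsub
      omega

lemma blocks_diff_label (hT : IsPSTS V B) (hd : Disjoint A₁ A₂)
    {y z u v u' v' : α} (hyz : y ≠ z) (hy : y ∉ A₁ ∪ A₂) (hz : z ∉ A₁ ∪ A₂)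
    (hu : u ∈ A₁) (hu' : u' ∈ A₁) (hv : v ∈ A₂) (hv' : v' ∈ A₂)
    (hb : ({y, u, v} : Finset α) ∈ B) (hb' : ({z, u', v'} : Finset α) ∈ B) :
    ¬ (u = u' ∧ v = v') := by
  rintro ⟨h1, h2⟩
  have hzA₁ : z ∉ A₁ := fun h => hz (Finset.mem_union_left _ h)
  have hzA₂ : z ∉ A₂ := fun h => hz (Finset.mem_union_right _ h)
  have hne : ({y, u, v} : Finset α) ≠ ({z, u', v'} : Finset α) := by
    intro h
    have : z ∈ ({y, u, v} : Finset α) := h ▸ (by simp)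
    simp only [Finset.mem_insert, Finset.mem_singleton] at this
    rcases this with h' | h' | h'
    · exact hyz h'.symm
    · exact hzA₁ (h' ▸ hu)
    · exact hzA₂ (h' ▸ hv)
  have hcard := hT.2 _ hb _ hb' hne
  have hsub : ({u, v} : Finset α) ⊆ {y, u, v} ∩ {z, u', v'} := by
    intro w hw; simp only [Finset.mem_insert, Finset.mem_singleton] at hw
    rcases hw with rfl | rfl <;> simp [h1, h2]
  have h2 : ({u, v} : Finset α).card = 2 :=
    Finset.card_pair (fun h => Finset.disjoint_left.mp hd hu (h ▸ hv))
  have := Finset.card_le_card hsub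
  omega

end PSTS


def perms : Fin 6 → Fin 3 → Fin 3 :=
  ![![0,1,2], ![0,2,1], ![1,0,2], ![1,2,0], ![2,0,1], ![2,1,0]]


abbrev COND (f₁ g₁ f₂ g₂ f₃ g₃ : Fin 3 → Fin 3) : Prop :=
  SL (f₁ 0) (f₂ 0) (g₁ 0) (g₂ 0) ∧
  SL (f₁ 0) (f₃ 0) (g₁ 0) (g₃ 0) ∧
  SL (f₂ 0) (f₃ 0) (g₂ 0) (g₃ 0) ∧
  SL (f₁ 1) (f₂ 1) (g₁ 1) (g₂ 1) ∧
  SL (f₁ 2) (f₃ 1) (g₁ 2) (g₃ 1) ∧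
  SL (f₂ 2) (f₃ 2) (g₂ 2) (g₃ 2) ∧
  DF (f₁ 0) (f₂ 1) (g₁ 0) (g₂ 1) ∧ DF (f₁ 0) (f₂ 2) (g₁ 0) (g₂ 2) ∧
  DF (f₁ 1) (f₂ 0) (g₁ 1) (g₂ 0) ∧ DF (f₁ 1) (f₂ 2) (g₁ 1) (g₂ 2) ∧
  DF (f₁ 2) (f₂ 0) (g₁ 2) (g₂ 0) ∧ DF (f₁ 2) (f₂ 1) (g₁ 2) (g₂ 1) ∧
  DF (f₁ 2) (f₂ 2) (g₁ 2) (g₂ 2) ∧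
  DF (f₁ 0) (f₃ 1) (g₁ 0) (g₃ 1) ∧ DF (f₁ 0) (f₃ 2) (g₁ 0) (g₃ 2) ∧
  DF (f₁ 1) (f₃ 0) (g₁ 1) (g₃ 0) ∧ DF (f₁ 1) (f₃ 1) (g₁ 1) (g₃ 1) ∧
  DF (f₁ 1) (f₃ 2) (g₁ 1) (g₃ 2) ∧ DF (f₁ 2) (f₃ 0) (g₁ 2) (g₃ 0) ∧
  DF (f₁ 2) (f₃ 2) (g₁ 2) (g₃ 2) ∧
  DF (f₂ 0) (f₃ 1) (g₂ 0) (g₃ 1) ∧ DF (f₂ 0) (f₃ 2) (g₂ 0) (g₃ 2) ∧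
  DF (f₂ 1) (f₃ 0) (g₂ 1) (g₃ 0) ∧ DF (f₂ 1) (f₃ 1) (g₂ 1) (g₃ 1) ∧
  DF (f₂ 1) (f₃ 2) (g₂ 1) (g₃ 2) ∧ DF (f₂ 2) (f₃ 0) (g₂ 2) (g₃ 0) ∧
  DF (f₂ 2) (f₃ 1) (g₂ 2) (g₃ 1)


set_option maxHeartbeats 4000000 in
set_option synthInstance.maxHeartbeats 2000000 in
set_option synthInstance.maxSize 5000 in
theorem core_s8 : ∀ k₁ l₁ k₂ l₂ k₃ l₃ : Fin 6,
    ¬ COND (perms k₁) (perms l₁) (perms k₂) (perms l₂) (perms k₃) (perms l₃) := by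
  decide

theorem inj_mem : ∀ f : Fin 3 → Fin 3, Function.Injective f → ∃ k : Fin 6, f = perms k := by
  decide

lemma KEY (f₁ g₁ f₂ g₂ f₃ g₃ : Fin 3 → Fin 3)
    (i1 : Function.Injective f₁) (i2 : Function.Injective g₁)
    (i3 : Function.Injective f₂) (i4 : Function.Injective g₂)
    (i5 : Function.Injective f₃) (i6 : Function.Injective g₃)
    (hc : COND f₁ g₁ f₂ g₂ f₃ g₃) : False := by
  obtain ⟨k₁, rfl⟩ := inj_mem f₁ i1
  obtain ⟨l₁, rfl⟩ := inj_mem g₁ i2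
  obtain ⟨k₂, rfl⟩ := inj_mem f₂ i3
  obtain ⟨l₂, rfl⟩ := inj_mem g₂ i4
  obtain ⟨k₃, rfl⟩ := inj_mem f₃ i5
  obtain ⟨l₃, rfl⟩ := inj_mem g₃ i6
  exact core_s8 k₁ l₁ k₂ l₂ k₃ l₃ hc

/-- Let `A₁`, `A₂` be disjoint blocks and `p, q, r, x` four distinct points of
`V \ (A₁ ∪ A₂)` such that no block containing `x` lies inside `{p, q, r, x}`.
Then at most two of the three 9-sets `A₁ ∪ A₂ ∪ {x, δ, ε}`, with
`{δ, ε} ⊆ {p, q, r}`, can be partitioned into three pairwise disjoint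
blocks. -/
theorem at_most_two_nine_sets_partition {α : Type*} [DecidableEq α]
    (V : Finset α) (B : Finset (Finset α)) (hT : IsPSTS V B)
    (A₁ A₂ : Finset α) (h₁ : A₁ ∈ B) (h₂ : A₂ ∈ B) (hd : Disjoint A₁ A₂)
    (p q r x : α) (hnd : ([p, q, r, x] : List α).Nodup)
    (hp : p ∈ V \ (A₁ ∪ A₂)) (hq : q ∈ V \ (A₁ ∪ A₂))
    (hr : r ∈ V \ (A₁ ∪ A₂)) (hx : x ∈ V \ (A₁ ∪ A₂))
    (hblk : ∀ b ∈ B, x ∈ b → ¬ b ⊆ ({p, q, r, x} : Finset α)) :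
    ¬ (PartitionsInto3 B (A₁ ∪ A₂ ∪ {x, p, q}) ∧
        PartitionsInto3 B (A₁ ∪ A₂ ∪ {x, p, r}) ∧
        PartitionsInto3 B (A₁ ∪ A₂ ∪ {x, q, r})) := by
  rintro ⟨hP1, hP2, hP3⟩
  simp only [List.nodup_cons, List.mem_cons, List.not_mem_nil, or_false, not_or,
    List.mem_singleton, List.nodup_nil, and_true] at hnd
  obtain ⟨⟨hpq, hpr, hpx⟩, ⟨hqr, hqx⟩, hrx, -⟩ := hnd
  have hxp : x ≠ p := fun h => hpx h.symm
  have hxq : x ≠ q := fun h => hqx h.symm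
  have hxr : x ≠ r := fun h => hrx h.symm
  have hpA : p ∉ A₁ ∪ A₂ := (Finset.mem_sdiff.mp hp).2
  have hqA : q ∉ A₁ ∪ A₂ := (Finset.mem_sdiff.mp hq).2
  have hrA : r ∉ A₁ ∪ A₂ := (Finset.mem_sdiff.mp hr).2
  have hxA : x ∉ A₁ ∪ A₂ := (Finset.mem_sdiff.mp hx).2
  have hno1 : ({x, p, q} : Finset α) ∉ B := fun hb =>
    hblk _ hb (by simp) (by
      intro z hz
      simp only [Finset.mem_insert, Finset.mem_singleton] at hz ⊢
      tauto)
  have hno2 : ({x, p, r} : Finset α) ∉ B := fun hb =>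
    hblk _ hb (by simp) (by
      intro z hz
      simp only [Finset.mem_insert, Finset.mem_singleton] at hz ⊢
      tauto)
  have hno3 : ({x, q, r} : Finset α) ∉ B := fun hb =>
    hblk _ hb (by simp) (by
      intro z hz
      simp only [Finset.mem_insert, Finset.mem_singleton] at hz ⊢
      tauto)
  obtain ⟨a1, b1, a2, b2, a3, b3, ha1, ha2, ha3, hb1, hb2, hb3,
    na12, na13, na23, nb12, nb13, nb23, hX1, hp1, hq1⟩ :=
    struct hT h₁ h₂ hd hxA hpA hqA hxp hxq hpq hno1 hP1
  obtain ⟨a4, b4, a5, b5, a6, b6, ha4, ha5, ha6, hb4, hb5, hb6,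
    na45, na46, na56, nb45, nb46, nb56, hX2, hp2, hr2⟩ :=
    struct hT h₁ h₂ hd hxA hpA hrA hxp hxr hpr hno2 hP2
  obtain ⟨a7, b7, a8, b8, a9, b9, ha7, ha8, ha9, hb7, hb8, hb9,
    na78, na79, na89, nb78, nb79, nb89, hX3, hq3, hr3⟩ :=
    struct hT h₁ h₂ hd hxA hqA hrA hxq hxr hqr hno3 hP3
  have cA1 : A₁.card = 3 := (hT.1 _ h₁).2
  have cA2 : A₂.card = 3 := (hT.1 _ h₂).2
  let e₁ : {a // a ∈ A₁} ≃ Fin 3 := A₁.equivFinOfCardEq cA1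
  let e₂ : {a // a ∈ A₂} ≃ Fin 3 := A₂.equivFinOfCardEq cA2
  have E1 : ∀ {u u' : α} (hu : u ∈ A₁) (hu' : u' ∈ A₁),
      e₁ ⟨u, hu⟩ = e₁ ⟨u', hu'⟩ ↔ u = u' := by
    intro u u' hu hu'
    constructor
    · intro h
      exact Subtype.mk_eq_mk.mp (e₁.injective h)
    · intro h
      exact congrArg e₁ (Subtype.ext h)
  have E2 : ∀ {v v' : α} (hv : v ∈ A₂) (hv' : v' ∈ A₂),
      e₂ ⟨v, hv⟩ = e₂ ⟨v', hv'⟩ ↔ v = v' := by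
    intro v v' hv hv'
    constructor
    · intro h
      exact Subtype.mk_eq_mk.mp (e₂.injective h)
    · intro h
      exact congrArg e₂ (Subtype.ext h)
  have mkSL : ∀ {y u v u' v' : α} (hu : u ∈ A₁) (hu' : u' ∈ A₁) (hv : v ∈ A₂) (hv' : v' ∈ A₂),
      y ∉ A₁ ∪ A₂ → ({y, u, v} : Finset α) ∈ B → ({y, u', v'} : Finset α) ∈ B →
      SL (e₁ ⟨u, hu⟩) (e₁ ⟨u', hu'⟩) (e₂ ⟨v, hv⟩) (e₂ ⟨v', hv'⟩) := by
    intro y u v u' v' hu hu' hv hv' hy hb hb'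
    rcases blocks_same_label hT hd hy hu hu' hv hv' hb hb' with ⟨h, h'⟩ | ⟨h, h'⟩
    · exact Or.inl ⟨(E1 hu hu').mpr h, (E2 hv hv').mpr h'⟩
    · exact Or.inr ⟨fun hh => h ((E1 hu hu').mp hh), fun hh => h' ((E2 hv hv').mp hh)⟩
  have mkDF : ∀ {y z u v u' v' : α} (hu : u ∈ A₁) (hu' : u' ∈ A₁) (hv : v ∈ A₂) (hv' : v' ∈ A₂),
      y ≠ z → y ∉ A₁ ∪ A₂ → z ∉ A₁ ∪ A₂ →
      ({y, u, v} : Finset α) ∈ B → ({z, u', v'} : Finset α) ∈ B →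
      DF (e₁ ⟨u, hu⟩) (e₁ ⟨u', hu'⟩) (e₂ ⟨v, hv⟩) (e₂ ⟨v', hv'⟩) := by
    intro y z u v u' v' hu hu' hv hv' hyz hy hz hb hb'
    rintro ⟨h, h'⟩
    exact blocks_diff_label hT hd hyz hy hz hu hu' hv hv' hb hb'
      ⟨(E1 hu hu').mp h, (E2 hv hv').mp h'⟩
  have NE1 : ∀ {u u' : α} (hu : u ∈ A₁) (hu' : u' ∈ A₁), u ≠ u' →
      e₁ ⟨u, hu⟩ ≠ e₁ ⟨u', hu'⟩ := fun hu hu' h hh => h ((E1 hu hu').mp hh)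
  have NE2 : ∀ {v v' : α} (hv : v ∈ A₂) (hv' : v' ∈ A₂), v ≠ v' →
      e₂ ⟨v, hv⟩ ≠ e₂ ⟨v', hv'⟩ := fun hv hv' h hh => h ((E2 hv hv').mp hh)
  exact KEY
    ![e₁ ⟨a1, ha1⟩, e₁ ⟨a2, ha2⟩, e₁ ⟨a3, ha3⟩]
    ![e₂ ⟨b1, hb1⟩, e₂ ⟨b2, hb2⟩, e₂ ⟨b3, hb3⟩]
    ![e₁ ⟨a4, ha4⟩, e₁ ⟨a5, ha5⟩, e₁ ⟨a6, ha6⟩]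
    ![e₂ ⟨b4, hb4⟩, e₂ ⟨b5, hb5⟩, e₂ ⟨b6, hb6⟩]
    ![e₁ ⟨a7, ha7⟩, e₁ ⟨a8, ha8⟩, e₁ ⟨a9, ha9⟩]
    ![e₂ ⟨b7, hb7⟩, e₂ ⟨b8, hb8⟩, e₂ ⟨b9, hb9⟩]
    (vecInj (NE1 ha1 ha2 na12) (NE1 ha1 ha3 na13) (NE1 ha2 ha3 na23))
    (vecInj (NE2 hb1 hb2 nb12) (NE2 hb1 hb3 nb13) (NE2 hb2 hb3 nb23))
    (vecInj (NE1 ha4 ha5 na45) (NE1 ha4 ha6 na46) (NE1 ha5 ha6 na56))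
    (vecInj (NE2 hb4 hb5 nb45) (NE2 hb4 hb6 nb46) (NE2 hb5 hb6 nb56))
    (vecInj (NE1 ha7 ha8 na78) (NE1 ha7 ha9 na79) (NE1 ha8 ha9 na89))
    (vecInj (NE2 hb7 hb8 nb78) (NE2 hb7 hb9 nb79) (NE2 hb8 hb9 nb89))
    ⟨mkSL ha1 ha4 hb1 hb4 hxA hX1 hX2,
     mkSL ha1 ha7 hb1 hb7 hxA hX1 hX3,
     mkSL ha4 ha7 hb4 hb7 hxA hX2 hX3,
     mkSL ha2 ha5 hb2 hb5 hpA hp1 hp2,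
     mkSL ha3 ha8 hb3 hb8 hqA hq1 hq3,
     mkSL ha6 ha9 hb6 hb9 hrA hr2 hr3,
     mkDF ha1 ha5 hb1 hb5 hxp hxA hpA hX1 hp2,
     mkDF ha1 ha6 hb1 hb6 hxr hxA hrA hX1 hr2,
     mkDF ha2 ha4 hb2 hb4 (fun h => hxp h.symm) hpA hxA hp1 hX2,
     mkDF ha2 ha6 hb2 hb6 hpr hpA hrA hp1 hr2,
     mkDF ha3 ha4 hb3 hb4 (fun h => hxq h.symm) hqA hxA hq1 hX2,
     mkDF ha3 ha5 hb3 hb5 (fun h => hpq h.symm) hqA hpA hq1 hp2,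
     mkDF ha3 ha6 hb3 hb6 hqr hqA hrA hq1 hr2,
     mkDF ha1 ha8 hb1 hb8 hxq hxA hqA hX1 hq3,
     mkDF ha1 ha9 hb1 hb9 hxr hxA hrA hX1 hr3,
     mkDF ha2 ha7 hb2 hb7 (fun h => hxp h.symm) hpA hxA hp1 hX3,
     mkDF ha2 ha8 hb2 hb8 hpq hpA hqA hp1 hq3,
     mkDF ha2 ha9 hb2 hb9 hpr hpA hrA hp1 hr3,
     mkDF ha3 ha7 hb3 hb7 (fun h => hxq h.symm) hqA hxA hq1 hX3,
     mkDF ha3 ha9 hb3 hb9 hqr hqA hrA hq1 hr3,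
     mkDF ha4 ha8 hb4 hb8 hxq hxA hqA hX2 hq3,
     mkDF ha4 ha9 hb4 hb9 hxr hxA hrA hX2 hr3,
     mkDF ha5 ha7 hb5 hb7 (fun h => hxp h.symm) hpA hxA hp2 hX3,
     mkDF ha5 ha8 hb5 hb8 hpq hpA hqA hp2 hq3,
     mkDF ha5 ha9 hb5 hb9 hpr hpA hrA hp2 hr3,
     mkDF ha6 ha7 hb6 hb7 (fun h => hxr h.symm) hrA hxA hr2 hX3,
     mkDF ha6 ha8 hb6 hb8 (fun h => hqr h.symm) hrA hqA hr2 hq3⟩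
end

section
/- Suppose that every partial Steiner triple system of order 12 that has three pairwise disjoint blocks but does not have four pairwise disjoint blocks admits three pairwise disjoint blocks {x₁,x₂,x₃}, {x₄,x₅,x₆}, {x₇,x₈,x₉} and a labelling a, b, c of the three remaining points such that the sequence x₁, x₂, x₄, x₃, x₅, x₇, x₆, x₈, a, x₉, b, c of all twelve points has no proper segment that can be partitioned into pairwise disjoint blocks. Then every partial Steiner triple system of order at least 13 having at most three pairwise disjoint blocks is sequenceable. -/
/-- `B` contains `k` pairwise disjoint blocks. -/
def HasDisjointBlocks {α : Type*} [DecidableEq α] (B : Finset (Finset α))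
    (k : ℕ) : Prop :=
  ∃ P : Finset (Finset α), P ⊆ B ∧ P.card = k ∧
    (P : Set (Finset α)).Pairwise Disjoint

section helpers
set_option linter.unusedSectionVars false
variable {α : Type*} [DecidableEq α]

lemma psts_aux_drop {pre suf : List α} {z : α} (h : (pre ++ suf).Nodup) (hz : z ∈ pre)
    {i : ℕ} (hi : z ∈ (pre ++ suf).drop i) : i < pre.length := by
  by_contra hle
  push_neg at hle
  rw [List.drop_append, List.drop_eq_nil_of_le hle] at hi
  simp only [List.nil_append] at hi
  exact (List.disjoint_of_nodup_append h) hz (List.mem_of_mem_drop hi)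

lemma psts_aux_take {pre suf : List α} {z : α} (h : (pre ++ suf).Nodup) (hz : z ∈ suf)
    {j : ℕ} (hj : z ∈ (pre ++ suf).take j) : pre.length < j := by
  by_contra hle
  push_neg at hle
  rw [List.take_append, Nat.sub_eq_zero_of_le hle] at hj
  simp only [List.take_zero, List.append_nil] at hj
  exact (List.disjoint_of_nodup_append h) (List.take_subset _ _ hj) hz

lemma psts_window_lower {l : List α} (hl : l.Nodup) {pre suf : List α} (hls : l = pre ++ suf)
    {z : α} (hz : z ∈ pre) {i m : ℕ} (hmem : z ∈ (l.drop i).take m) : i < pre.length := by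
  subst hls
  exact psts_aux_drop hl hz (List.take_subset _ _ hmem)

lemma psts_window_upper {l : List α} (hl : l.Nodup) {pre suf : List α} (hls : l = pre ++ suf)
    {z : α} (hz : z ∈ suf) {i k : ℕ} (hmem : z ∈ (l.drop i).take k) : pre.length < i + k := by
  subst hls
  have h1 : z ∈ ((pre ++ suf).take (i + k)).drop i := by
    rw [List.drop_take]
    simpa using hmem
  exact psts_aux_take hl hz (List.mem_of_mem_drop h1)

lemma psts_drop_add (A s : List α) (j : ℕ) : (A ++ s).drop (A.length + j) = s.drop j := by
  rw [List.drop_append, List.drop_eq_nil_of_le (by omega)]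
  simp

lemma psts_take_norm (L : List α) (m : ℕ) : L.take m = L.take (L.take m).length := by
  rw [List.take_eq_take_iff, List.length_take]
  omega

lemma psts_card_biUnion {V B : Finset α × Finset (Finset α)} : True := trivial

lemma psts_partition_card {V : Finset α} {B : Finset (Finset α)} (hpsts : IsPSTS V B)
    {P : Finset (Finset α)} (hPB : P ⊆ B)
    (hdisj : (P : Set (Finset α)).Pairwise Disjoint) :
    (P.biUnion id).card = 3 * P.card := by
  show (P.biUnion (fun x => x)).card = 3 * P.card
  rw [Finset.card_biUnion (fun x hx y hy hxy => hdisj (Finset.mem_coe.2 hx) (Finset.mem_coe.2 hy) hxy)]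
  rw [Finset.sum_congr rfl (fun b hb => (hpsts.1 b (hPB hb)).2)]
  rw [Finset.sum_const, smul_eq_mul, mul_comm]

lemma psts_card_lt {B : Finset (Finset α)} {k : ℕ} (hno : ¬ HasDisjointBlocks B k)
    {P : Finset (Finset α)} (hPB : P ⊆ B)
    (hdisj : (P : Set (Finset α)).Pairwise Disjoint) : P.card < k := by
  by_contra hle
  push_neg at hle
  obtain ⟨Q, hQP, hQc⟩ := Finset.exists_subset_card_eq hle
  exact hno ⟨Q, hQP.trans hPB, hQc, hdisj.mono (Finset.coe_subset.2 hQP)⟩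

lemma psts_extend {B : Finset (Finset α)} {k : ℕ} (hno : ¬ HasDisjointBlocks B k)
    {P : Finset (Finset α)} (hPB : P ⊆ B)
    (hPd : (P : Set (Finset α)).Pairwise Disjoint)
    {E : Finset (Finset α)} (hEB : E ⊆ B)
    (hEd : (E : Set (Finset α)).Pairwise Disjoint)
    (hd : ∀ D ∈ E, ∀ K ∈ P, Disjoint D K)
    (hne : ∀ D ∈ E, D.Nonempty) : P.card + E.card < k := by
  have hdisjPE : Disjoint P E := by
    rw [Finset.disjoint_left]
    intro D hDP hDE
    have := hd D hDE D hDP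
    obtain ⟨z, hz⟩ := hne D hDE
    exact (Finset.disjoint_left.1 this) hz hz
  have hsub : P ∪ E ⊆ B := Finset.union_subset hPB hEB
  have hpair : ((P ∪ E : Finset (Finset α)) : Set (Finset α)).Pairwise Disjoint := by
    intro x hx y hy hxy
    simp only [Finset.coe_union, Set.mem_union, Finset.mem_coe] at hx hy
    rcases hx with hx | hx <;> rcases hy with hy | hy
    · exact hPd hx hy hxy
    · exact (hd y hy x hx).symm
    · exact hd x hx y hy
    · exact hEd hx hy hxy
  have := psts_card_lt hno hsub hpair
  rwa [Finset.card_union_of_disjoint hdisjPE] at this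

lemma psts_pick {V : Finset α} {B : Finset (Finset α)} (hpsts : IsPSTS V B)
    {w v : α} (hwv : w ≠ v) {G : Finset α} (hG : 2 ≤ G.card)
    (hGw : w ∉ G) (hGv : v ∉ G) :
    ∃ u ∈ G, ({w, v, u} : Finset α) ∉ B := by
  by_contra hcon
  push_neg at hcon
  -- all u in G give blocks; two distinct elements give contradiction
  obtain ⟨u, hu, u', hu', huu'⟩ := Finset.one_lt_card.mp hG
  have hK : ({w, v, u} : Finset α) ∈ B := hcon u hu
  have hK' : ({w, v, u'} : Finset α) ∈ B := hcon u' hu'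
  have hKne : ({w, v, u} : Finset α) ≠ ({w, v, u'} : Finset α) := by
    intro he
    have : u ∈ ({w, v, u'} : Finset α) := he ▸ (by simp : u ∈ ({w, v, u} : Finset α))
    simp only [Finset.mem_insert, Finset.mem_singleton] at this
    rcases this with h | h | h
    · exact hGw (h ▸ hu)
    · exact hGv (h ▸ hu)
    · exact huu' h
  have hle := hpsts.2 _ hK _ hK' hKne
  have hsub : ({w, v} : Finset α) ⊆ ({w, v, u} : Finset α) ∩ ({w, v, u'} : Finset α) := by
    intro z hz
    simp only [Finset.mem_insert, Finset.mem_singleton] at hz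
    rcases hz with rfl | rfl <;> simp
  have : 2 ≤ (({w, v, u} : Finset α) ∩ ({w, v, u'} : Finset α)).card := by
    calc 2 = ({w, v} : Finset α).card := (Finset.card_pair hwv).symm
    _ ≤ _ := Finset.card_le_card hsub
  omega

end helpers

section helpers2
set_option linter.unusedSectionVars false
variable {α : Type*} [DecidableEq α]

lemma psts_two_common {V : Finset α} {B : Finset (Finset α)} (hpsts : IsPSTS V B)
    {K D : Finset α} (hK : K ∈ B) (hD : D ∈ B) {z₁ z₂ : α}
    (h1 : z₁ ∈ K) (h2 : z₂ ∈ K) (hd1 : z₁ ∈ D) (hd2 : z₂ ∈ D)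
    (hz : z₁ ≠ z₂) (hne : K ≠ D) : False := by
  have hle := hpsts.2 K hK D hD hne
  have hsub : ({z₁, z₂} : Finset α) ⊆ K ∩ D := by
    intro z hzm
    simp only [Finset.mem_insert, Finset.mem_singleton] at hzm
    rcases hzm with rfl | rfl <;> simp [Finset.mem_inter, h1, h2, hd1, hd2]
  have h2le : 2 ≤ (K ∩ D).card := by
    calc 2 = ({z₁, z₂} : Finset α).card := (Finset.card_pair hz).symm
    _ ≤ _ := Finset.card_le_card hsub
  omega

lemma psts_meets {B : Finset (Finset α)} {k : ℕ} (hno : ¬ HasDisjointBlocks B k)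
    {P : Finset (Finset α)} (hPB : P ⊆ B)
    (hPd : (P : Set (Finset α)).Pairwise Disjoint)
    {S : Finset α} (hPuni : P.biUnion id = S)
    {D : Finset α} (hDB : D ∈ B) (hDne : D.Nonempty) (hcard : k ≤ P.card + 1) :
    ∃ z ∈ D, z ∈ S := by
  by_contra hcon
  push_neg at hcon
  have hd : ∀ D' ∈ ({D} : Finset (Finset α)), ∀ K ∈ P, Disjoint D' K := by
    intro D' hD' K hKP
    rw [Finset.mem_singleton] at hD'
    subst hD'
    rw [Finset.disjoint_left]
    intro z hzD hzK
    exact hcon z hzD (hPuni ▸ (Finset.subset_biUnion_of_mem id hKP) hzK)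
  have := psts_extend hno hPB hPd (E := {D}) (by simpa using hDB)
    (by simp) hd (by simpa using hDne)
  simp only [Finset.card_singleton] at this
  omega

lemma psts_meets2 {B : Finset (Finset α)} {k : ℕ} (hno : ¬ HasDisjointBlocks B k)
    {P : Finset (Finset α)} (hPB : P ⊆ B)
    (hPd : (P : Set (Finset α)).Pairwise Disjoint)
    {S : Finset α} (hPuni : P.biUnion id = S)
    {D₁ D₂ : Finset α} (hD1B : D₁ ∈ B) (hD2B : D₂ ∈ B) (hD12 : Disjoint D₁ D₂)
    (hD1ne : D₁.Nonempty) (hD2ne : D₂.Nonempty) (hcard : k ≤ P.card + 2) :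
    ∃ z, (z ∈ D₁ ∨ z ∈ D₂) ∧ z ∈ S := by
  by_contra hcon
  push_neg at hcon
  have hne12 : D₁ ≠ D₂ := by
    rintro rfl
    obtain ⟨z, hz⟩ := hD1ne
    exact (Finset.disjoint_left.1 hD12) hz hz
  have hd : ∀ D' ∈ ({D₁, D₂} : Finset (Finset α)), ∀ K ∈ P, Disjoint D' K := by
    intro D' hD' K hKP
    rw [Finset.disjoint_left]
    intro z hzD hzK
    have hzS : z ∈ S := hPuni ▸ (Finset.subset_biUnion_of_mem id hKP) hzK
    simp only [Finset.mem_insert, Finset.mem_singleton] at hD'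
    rcases hD' with rfl | rfl
    · exact (hcon z (Or.inl hzD)) hzS
    · exact (hcon z (Or.inr hzD)) hzS
  have hEd : (({D₁, D₂} : Finset (Finset α)) : Set (Finset α)).Pairwise Disjoint := by
    intro x hx y hy hxy
    simp only [Finset.coe_insert, Set.mem_insert_iff, Finset.mem_coe,
      Finset.mem_singleton, Set.mem_singleton_iff] at hx hy
    rcases hx with rfl | rfl <;> rcases hy with rfl | rfl
    · exact absurd rfl hxy
    · exact hD12
    · exact hD12.symm
    · exact absurd rfl hxy
  have hEB : ({D₁, D₂} : Finset (Finset α)) ⊆ B := by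
    intro D' hD'
    simp only [Finset.mem_insert, Finset.mem_singleton] at hD'
    rcases hD' with rfl | rfl <;> assumption
  have hEne : ∀ D' ∈ ({D₁, D₂} : Finset (Finset α)), D'.Nonempty := by
    intro D' hD'
    simp only [Finset.mem_insert, Finset.mem_singleton] at hD'
    rcases hD' with rfl | rfl <;> assumption
  have := psts_extend hno hPB hPd hEB hEd hd hEne
  rw [Finset.card_insert_of_notMem (by simpa using hne12), Finset.card_singleton] at this
  omega

end helpers2

set_option linter.unusedSectionVars false
set_option maxHeartbeats 1600000

/-- If every partial Steiner triple system of order 12 with three but not four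
pairwise disjoint blocks admits three pairwise disjoint blocks
`{x₁,x₂,x₃}, {x₄,x₅,x₆}, {x₇,x₈,x₉}` and a labelling `a, b, c` of the three
remaining points such that the sequence `x₁,x₂,x₄,x₃,x₅,x₇,x₆,x₈,a,x₉,b,c`
has no proper segment partitionable into pairwise disjoint blocks, then every
partial Steiner triple system of order at least 13 with at most three pairwise
disjoint blocks is sequenceable. -/
theorem stage_lemma {α : Type*} [DecidableEq α]
    (hyp : ∀ (V' : Finset α) (B' : Finset (Finset α)), IsPSTS V' B' →
      V'.card = 12 → HasDisjointBlocks B' 3 → ¬ HasDisjointBlocks B' 4 →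
      ∃ x₁ x₂ x₃ x₄ x₅ x₆ x₇ x₈ x₉ a b c : α,
        ({x₁, x₂, x₃} : Finset α) ∈ B' ∧ ({x₄, x₅, x₆} : Finset α) ∈ B' ∧
        ({x₇, x₈, x₉} : Finset α) ∈ B' ∧
        Disjoint ({x₁, x₂, x₃} : Finset α) ({x₄, x₅, x₆} : Finset α) ∧
        Disjoint ({x₁, x₂, x₃} : Finset α) ({x₇, x₈, x₉} : Finset α) ∧
        Disjoint ({x₄, x₅, x₆} : Finset α) ({x₇, x₈, x₉} : Finset α) ∧
        ([x₁, x₂, x₄, x₃, x₅, x₇, x₆, x₈, a, x₉, b, c] : List α).Nodup ∧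
        ([x₁, x₂, x₄, x₃, x₅, x₇, x₆, x₈, a, x₉, b, c] : List α).toFinset = V' ∧
        (∀ i m : ℕ,
          (([x₁, x₂, x₄, x₃, x₅, x₇, x₆, x₈, a, x₉, b, c] : List α).drop i).take m ≠ [] →
          ((([x₁, x₂, x₄, x₃, x₅, x₇, x₆, x₈, a, x₉, b, c] : List α).drop i).take m).length < 12 →
          ¬ IsBlockPartition B'
            ((([x₁, x₂, x₄, x₃, x₅, x₇, x₆, x₈, a, x₉, b, c] : List α).drop i).take m).toFinset)) :
    ∀ (V : Finset α) (B : Finset (Finset α)), IsPSTS V B → 13 ≤ V.card →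
      ¬ HasDisjointBlocks B 4 → Sequenceable V B := by
  intro V B hpsts hV hno4
  by_cases h3 : HasDisjointBlocks B 3
  · -- three but not four pairwise disjoint blocks: use the 12-point hypothesis
    obtain ⟨P₀, hP₀B, hP₀c, hP₀d⟩ := h3
    obtain ⟨C1, C2, C3, hc12, hc13, hc23, rfl⟩ := Finset.card_eq_three.mp hP₀c
    have hC1B : C1 ∈ B := hP₀B (by simp)
    have hC2B : C2 ∈ B := hP₀B (by simp)
    have hC3B : C3 ∈ B := hP₀B (by simp)
    have hcd12 : Disjoint C1 C2 := hP₀d (by simp) (by simp) hc12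
    have hcd13 : Disjoint C1 C3 := hP₀d (by simp) (by simp) hc13
    have hcd23 : Disjoint C2 C3 := hP₀d (by simp) (by simp) hc23
    have hXV : C1 ∪ C2 ∪ C3 ⊆ V :=
      Finset.union_subset (Finset.union_subset (hpsts.1 C1 hC1B).1 (hpsts.1 C2 hC2B).1)
        (hpsts.1 C3 hC3B).1
    have hXc : (C1 ∪ C2 ∪ C3).card = 9 := by
      rw [Finset.card_union_of_disjoint (Finset.disjoint_union_left.mpr ⟨hcd13, hcd23⟩),
        Finset.card_union_of_disjoint hcd12, (hpsts.1 C1 hC1B).2, (hpsts.1 C2 hC2B).2,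
        (hpsts.1 C3 hC3B).2]
    have h3le : 3 ≤ (V \ (C1 ∪ C2 ∪ C3)).card := by
      rw [Finset.card_sdiff_of_subset hXV, hXc]
      omega
    obtain ⟨G, hGsub, hGc⟩ := Finset.exists_subset_card_eq h3le
    have hGV : G ⊆ V := hGsub.trans (Finset.sdiff_subset)
    have hdXG : Disjoint (C1 ∪ C2 ∪ C3) G := by
      rw [Finset.disjoint_right]
      intro z hz hX
      exact (Finset.mem_sdiff.mp (hGsub hz)).2 hX
    set V' : Finset α := (C1 ∪ C2 ∪ C3) ∪ G with hV'
    have hV'c : V'.card = 12 := by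
      rw [hV', Finset.card_union_of_disjoint hdXG, hXc, hGc]
    have hV'V : V' ⊆ V := Finset.union_subset hXV hGV
    set B' : Finset (Finset α) := B.filter (fun b => b ⊆ V') with hB'
    have hB'B : B' ⊆ B := Finset.filter_subset _ _
    have hB'psts : IsPSTS V' B' := by
      constructor
      · intro bb hb
        rw [hB', Finset.mem_filter] at hb
        exact ⟨hb.2, (hpsts.1 bb hb.1).2⟩
      · intro b₁ h₁ b₂ h₂ hnb
        exact hpsts.2 b₁ (hB'B h₁) b₂ (hB'B h₂) hnb
    have hB'3 : HasDisjointBlocks B' 3 := by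
      refine ⟨{C1, C2, C3}, ?_, hP₀c, hP₀d⟩
      intro C hC
      simp only [Finset.mem_insert, Finset.mem_singleton] at hC
      rw [hB', Finset.mem_filter]
      rcases hC with rfl | rfl | rfl
      · exact ⟨hC1B, (Finset.subset_union_left.trans Finset.subset_union_left).trans
          Finset.subset_union_left⟩
      · exact ⟨hC2B, (Finset.subset_union_right.trans Finset.subset_union_left).trans
          Finset.subset_union_left⟩
      · exact ⟨hC3B, Finset.subset_union_right.trans Finset.subset_union_left⟩
    have hB'no4 : ¬ HasDisjointBlocks B' 4 := by
      rintro ⟨Q, hQ, hc, hd⟩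
      exact hno4 ⟨Q, hQ.trans hB'B, hc, hd⟩
    obtain ⟨x1, x2, x3, x4, x5, x6, x7, x8, x9, a, b, c, hxB1, hxB2, hxB3,
      hxd12, hxd13, hxd23, hnd12, htf12, hwin⟩ := hyp V' B' hB'psts hV'c hB'3 hB'no4
    set tl : List α := (V \ V').toList with htl
    have htlc : tl.length = V.card - 12 := by
      rw [htl, Finset.length_toList, Finset.card_sdiff_of_subset hV'V, hV'c]
    set l : List α := [x1, x2, x4, x3, x5, x7, x6, x8, a, x9, b, c] ++ tl with hldef
    have hlnd : l.Nodup := by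
      rw [hldef]
      refine List.Nodup.append hnd12 (Finset.nodup_toList _) ?_
      intro z hz hz2
      have hzV' : z ∈ V' := htf12 ▸ List.mem_toFinset.mpr hz
      exact (Finset.mem_sdiff.mp (Finset.mem_toList.mp hz2)).2 hzV'
    have hltf : l.toFinset = V := by
      rw [hldef, List.toFinset_append, htf12, htl, Finset.toList_toFinset]
      exact Finset.union_sdiff_of_subset hV'V
    have hllen : l.length = V.card := by
      rw [hldef, List.length_append, htlc]
      simp
      omega
    refine ⟨l, hlnd, hltf, ?_⟩
    intro i m hne hlen hbp
    obtain ⟨P, hPB, hPd, hPuni⟩ := hbp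
    have htnd : ((l.drop i).take m).Nodup :=
      ((List.take_sublist _ _).trans (List.drop_sublist _ _)).nodup hlnd
    have hklen : ((l.drop i).take m).length = 3 * P.card := by
      have hbc := psts_partition_card hpsts hPB hPd
      rw [hPuni] at hbc
      rw [← List.toFinset_card_of_nodup htnd]
      exact hbc
    have hPlt : P.card < 4 := psts_card_lt hno4 hPB hPd
    have hPpos : 0 < P.card := by
      have := List.length_pos_iff.2 hne
      omega
    have hmin : ((l.drop i).take m).length = m ∨ ((l.drop i).take m).length = l.length - i := by
      rw [List.length_take, List.length_drop]
      rcases Nat.le_total m (l.length - i) with h | h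
      · exact Or.inl (min_eq_left h)
      · exact Or.inr (min_eq_right h)
    have hlem : ((l.drop i).take m).length ≤ m := by
      rw [List.length_take]
      exact min_le_left _ _
    by_cases hcase : i + ((l.drop i).take m).length ≤ 12
    · -- the window lies inside the 12-point subsystem
      have htm : ((l.drop i).take m).length = m := by
        rcases hmin with h | h
        · exact h
        · exfalso
          have h1 : 1 ≤ ((l.drop i).take m).length := by omega
          omega
      have him : i + m ≤ 12 := by omega
      have htpre : (l.drop i).take m
          = (([x1, x2, x4, x3, x5, x7, x6, x8, a, x9, b, c] : List α).drop i).take m := by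
        rw [hldef, List.drop_append, List.take_append]
        have h1 : i - ([x1, x2, x4, x3, x5, x7, x6, x8, a, x9, b, c] : List α).length = 0 := by
          simp only [List.length_cons, List.length_nil]
          omega
        have h2 : m - (([x1, x2, x4, x3, x5, x7, x6, x8, a, x9, b, c] : List α).drop i).length
            = 0 := by
          rw [List.length_drop]
          simp only [List.length_cons, List.length_nil]
          omega
        rw [h1, h2]
        simp
      refine hwin i m ?_ ?_ ⟨P, ?_, hPd, ?_⟩
      · rw [← htpre]
        exact hne
      · have heq : ((([x1, x2, x4, x3, x5, x7, x6, x8, a, x9, b, c] : List α).drop i).take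
            m).length = ((l.drop i).take m).length := by rw [htpre]
        omega
      · intro K hK
        rw [hB', Finset.mem_filter]
        refine ⟨hPB hK, ?_⟩
        intro z hzK
        have hzS : z ∈ ((l.drop i).take m).toFinset :=
          hPuni ▸ (Finset.subset_biUnion_of_mem id hK) hzK
        have hzt : z ∈ (l.drop i).take m := List.mem_toFinset.mp hzS
        rw [htpre] at hzt
        have hzL : z ∈ ([x1, x2, x4, x3, x5, x7, x6, x8, a, x9, b, c] : List α) :=
          List.mem_of_mem_drop (List.take_subset _ _ hzt)
        rw [← htf12]
        exact List.mem_toFinset.mpr hzL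
      · rw [← htpre]
        exact hPuni
    · -- the window uses the tail
      push_neg at hcase
      have hi4 : 4 ≤ i := by omega
      have hB1B : ({x1, x2, x3} : Finset α) ∈ B := hB'B hxB1
      have hB2B : ({x4, x5, x6} : Finset α) ∈ B := hB'B hxB2
      have hB3B : ({x7, x8, x9} : Finset α) ∈ B := hB'B hxB3
      have hne12 : ({x1, x2, x3} : Finset α) ≠ ({x4, x5, x6} : Finset α) := by
        intro h
        exact (Finset.disjoint_left.mp hxd12 (show x1 ∈ ({x1, x2, x3} : Finset α) by simp))
          (h ▸ (show x1 ∈ ({x1, x2, x3} : Finset α) by simp))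
      have hne13 : ({x1, x2, x3} : Finset α) ≠ ({x7, x8, x9} : Finset α) := by
        intro h
        exact (Finset.disjoint_left.mp hxd13 (show x1 ∈ ({x1, x2, x3} : Finset α) by simp))
          (h ▸ (show x1 ∈ ({x1, x2, x3} : Finset α) by simp))
      have hne23 : ({x4, x5, x6} : Finset α) ≠ ({x7, x8, x9} : Finset α) := by
        intro h
        exact (Finset.disjoint_left.mp hxd23 (show x4 ∈ ({x4, x5, x6} : Finset α) by simp))
          (h ▸ (show x4 ∈ ({x4, x5, x6} : Finset α) by simp))
      have hmemS : ∀ K ∈ P, ∀ z ∈ K, z ∈ (l.drop i).take m := by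
        intro K hK z hzK
        exact List.mem_toFinset.mp (hPuni ▸ (Finset.subset_biUnion_of_mem id hK) hzK)
      have hnx1 : x1 ∉ (l.drop i).take m := by
        intro hmem
        have h := psts_window_lower hlnd
          (show l = [x1] ++ ([x2, x4, x3, x5, x7, x6, x8, a, x9, b, c] ++ tl)
            by rw [hldef]; simp) (by simp) hmem
        simp at h; omega
      have hnx2 : x2 ∉ (l.drop i).take m := by
        intro hmem
        have h := psts_window_lower hlnd
          (show l = [x1, x2] ++ ([x4, x3, x5, x7, x6, x8, a, x9, b, c] ++ tl)
            by rw [hldef]; simp) (by simp) hmem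
        simp at h; omega
      have hnx3 : x3 ∉ (l.drop i).take m := by
        intro hmem
        have h := psts_window_lower hlnd
          (show l = [x1, x2, x4, x3] ++ ([x5, x7, x6, x8, a, x9, b, c] ++ tl)
            by rw [hldef]; simp) (by simp) hmem
        simp at h; omega
      have hD1K : ∀ K ∈ P, Disjoint ({x1, x2, x3} : Finset α) K := by
        intro K hK
        rw [Finset.disjoint_left]
        intro z hzD hzK
        have hzt := hmemS K hK z hzK
        simp only [Finset.mem_insert, Finset.mem_singleton] at hzD
        rcases hzD with rfl | rfl | rfl
        · exact hnx1 hzt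
        · exact hnx2 hzt
        · exact hnx3 hzt
      rcases (show P.card = 1 ∨ P.card = 2 ∨ P.card = 3 by omega) with hp | hp | hp
      · -- single block entirely beyond position 9: misses all of x1..x9
        have hi10 : 10 ≤ i := by omega
        have hnx4 : x4 ∉ (l.drop i).take m := by
          intro hmem
          have h := psts_window_lower hlnd
            (show l = [x1, x2, x4] ++ ([x3, x5, x7, x6, x8, a, x9, b, c] ++ tl)
              by rw [hldef]; simp) (by simp) hmem
          simp at h; omega
        have hnx5 : x5 ∉ (l.drop i).take m := by
          intro hmem
          have h := psts_window_lower hlnd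
            (show l = [x1, x2, x4, x3, x5] ++ ([x7, x6, x8, a, x9, b, c] ++ tl)
              by rw [hldef]; simp) (by simp) hmem
          simp at h; omega
        have hnx6 : x6 ∉ (l.drop i).take m := by
          intro hmem
          have h := psts_window_lower hlnd
            (show l = [x1, x2, x4, x3, x5, x7, x6] ++ ([x8, a, x9, b, c] ++ tl)
              by rw [hldef]; simp) (by simp) hmem
          simp at h; omega
        have hnx7 : x7 ∉ (l.drop i).take m := by
          intro hmem
          have h := psts_window_lower hlnd
            (show l = [x1, x2, x4, x3, x5, x7] ++ ([x6, x8, a, x9, b, c] ++ tl)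
              by rw [hldef]; simp) (by simp) hmem
          simp at h; omega
        have hnx8 : x8 ∉ (l.drop i).take m := by
          intro hmem
          have h := psts_window_lower hlnd
            (show l = [x1, x2, x4, x3, x5, x7, x6, x8] ++ ([a, x9, b, c] ++ tl)
              by rw [hldef]; simp) (by simp) hmem
          simp at h; omega
        have hnx9 : x9 ∉ (l.drop i).take m := by
          intro hmem
          have h := psts_window_lower hlnd
            (show l = [x1, x2, x4, x3, x5, x7, x6, x8, a, x9] ++ ([b, c] ++ tl)
              by rw [hldef]; simp) (by simp) hmem
          simp at h; omega
        have hd : ∀ D ∈ ({{x1, x2, x3}, {x4, x5, x6}, {x7, x8, x9}} : Finset (Finset α)),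
            ∀ K ∈ P, Disjoint D K := by
          intro D hD K hK
          simp only [Finset.mem_insert, Finset.mem_singleton] at hD
          rcases hD with rfl | rfl | rfl
          · exact hD1K K hK
          · rw [Finset.disjoint_left]
            intro z hzD hzK
            have hzt := hmemS K hK z hzK
            simp only [Finset.mem_insert, Finset.mem_singleton] at hzD
            rcases hzD with rfl | rfl | rfl
            · exact hnx4 hzt
            · exact hnx5 hzt
            · exact hnx6 hzt
          · rw [Finset.disjoint_left]
            intro z hzD hzK
            have hzt := hmemS K hK z hzK
            simp only [Finset.mem_insert, Finset.mem_singleton] at hzD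
            rcases hzD with rfl | rfl | rfl
            · exact hnx7 hzt
            · exact hnx8 hzt
            · exact hnx9 hzt
        have hEB : ({{x1, x2, x3}, {x4, x5, x6}, {x7, x8, x9}} : Finset (Finset α)) ⊆ B := by
          intro D hD
          simp only [Finset.mem_insert, Finset.mem_singleton] at hD
          rcases hD with rfl | rfl | rfl <;> assumption
        have hEd : (({{x1, x2, x3}, {x4, x5, x6}, {x7, x8, x9}} : Finset (Finset α)) :
            Set (Finset α)).Pairwise Disjoint := by
          intro x hx y hy hxy
          simp only [Finset.coe_insert, Set.mem_insert_iff, Finset.mem_coe,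
            Finset.mem_singleton, Set.mem_singleton_iff] at hx hy
          rcases hx with rfl | rfl | rfl <;> rcases hy with rfl | rfl | rfl
          · exact absurd rfl hxy
          · exact hxd12
          · exact hxd13
          · exact hxd12.symm
          · exact absurd rfl hxy
          · exact hxd23
          · exact hxd13.symm
          · exact hxd23.symm
          · exact absurd rfl hxy
        have hEne : ∀ D ∈ ({{x1, x2, x3}, {x4, x5, x6}, {x7, x8, x9}} : Finset (Finset α)),
            D.Nonempty := by
          intro D hD
          simp only [Finset.mem_insert, Finset.mem_singleton] at hD
          rcases hD with rfl | rfl | rfl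
          · exact ⟨x1, by simp⟩
          · exact ⟨x4, by simp⟩
          · exact ⟨x7, by simp⟩
        have hEc : ({{x1, x2, x3}, {x4, x5, x6}, {x7, x8, x9}} : Finset (Finset α)).card = 3 := by
          rw [Finset.card_insert_of_notMem (by simp [hne12, hne13]),
            Finset.card_insert_of_notMem (by simpa using hne23), Finset.card_singleton]
        have := psts_extend hno4 hPB hPd hEB hEd hd hEne
        omega
      · -- two blocks: the window also misses x4, x5, x6
        have hi7 : 7 ≤ i := by omega
        have hnx4 : x4 ∉ (l.drop i).take m := by
          intro hmem
          have h := psts_window_lower hlnd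
            (show l = [x1, x2, x4] ++ ([x3, x5, x7, x6, x8, a, x9, b, c] ++ tl)
              by rw [hldef]; simp) (by simp) hmem
          simp at h; omega
        have hnx5 : x5 ∉ (l.drop i).take m := by
          intro hmem
          have h := psts_window_lower hlnd
            (show l = [x1, x2, x4, x3, x5] ++ ([x7, x6, x8, a, x9, b, c] ++ tl)
              by rw [hldef]; simp) (by simp) hmem
          simp at h; omega
        have hnx6 : x6 ∉ (l.drop i).take m := by
          intro hmem
          have h := psts_window_lower hlnd
            (show l = [x1, x2, x4, x3, x5, x7, x6] ++ ([x8, a, x9, b, c] ++ tl)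
              by rw [hldef]; simp) (by simp) hmem
          simp at h; omega
        have hd : ∀ D ∈ ({{x1, x2, x3}, {x4, x5, x6}} : Finset (Finset α)),
            ∀ K ∈ P, Disjoint D K := by
          intro D hD K hK
          simp only [Finset.mem_insert, Finset.mem_singleton] at hD
          rcases hD with rfl | rfl
          · exact hD1K K hK
          · rw [Finset.disjoint_left]
            intro z hzD hzK
            have hzt := hmemS K hK z hzK
            simp only [Finset.mem_insert, Finset.mem_singleton] at hzD
            rcases hzD with rfl | rfl | rfl
            · exact hnx4 hzt
            · exact hnx5 hzt
            · exact hnx6 hzt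
        have hEB : ({{x1, x2, x3}, {x4, x5, x6}} : Finset (Finset α)) ⊆ B := by
          intro D hD
          simp only [Finset.mem_insert, Finset.mem_singleton] at hD
          rcases hD with rfl | rfl <;> assumption
        have hEd : (({{x1, x2, x3}, {x4, x5, x6}} : Finset (Finset α)) :
            Set (Finset α)).Pairwise Disjoint := by
          intro x hx y hy hxy
          simp only [Finset.coe_insert, Set.mem_insert_iff, Finset.mem_coe,
            Finset.mem_singleton, Set.mem_singleton_iff] at hx hy
          rcases hx with rfl | rfl <;> rcases hy with rfl | rfl
          · exact absurd rfl hxy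
          · exact hxd12
          · exact hxd12.symm
          · exact absurd rfl hxy
        have hEne : ∀ D ∈ ({{x1, x2, x3}, {x4, x5, x6}} : Finset (Finset α)), D.Nonempty := by
          intro D hD
          simp only [Finset.mem_insert, Finset.mem_singleton] at hD
          rcases hD with rfl | rfl
          · exact ⟨x1, by simp⟩
          · exact ⟨x4, by simp⟩
        have hEc : ({{x1, x2, x3}, {x4, x5, x6}} : Finset (Finset α)).card = 2 := by
          rw [Finset.card_insert_of_notMem (by simpa using hne12), Finset.card_singleton]
        have := psts_extend hno4 hPB hPd hEB hEd hd hEne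
        omega
      · -- three blocks: adding {x1,x2,x3} would give four disjoint blocks
        have hd : ∀ D ∈ ({{x1, x2, x3}} : Finset (Finset α)), ∀ K ∈ P, Disjoint D K := by
          intro D hD K hK
          rw [Finset.mem_singleton] at hD
          subst hD
          exact hD1K K hK
        have := psts_extend hno4 hPB hPd (E := {{x1, x2, x3}})
          (by simpa using hB1B) (by simp) hd
          (by
            intro D hD
            rw [Finset.mem_singleton] at hD
            subst hD
            exact ⟨x1, by simp⟩)
        simp only [Finset.card_singleton] at this
        omega

  by_cases h2 : HasDisjointBlocks B 2
  · -- two but not three pairwise disjoint blocks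
    obtain ⟨P₀, hP₀B, hP₀c, hP₀d⟩ := h2
    obtain ⟨D1, D2, hD12ne, rfl⟩ := Finset.card_eq_two.mp hP₀c
    have hD1B : D1 ∈ B := hP₀B (by simp)
    have hD2B : D2 ∈ B := hP₀B (by simp)
    have hdD : Disjoint D1 D2 := hP₀d (by simp) (by simp) hD12ne
    obtain ⟨hD1V, hD1c⟩ := hpsts.1 D1 hD1B
    obtain ⟨hD2V, hD2c⟩ := hpsts.1 D2 hD2B
    obtain ⟨d1, d2, d3, hd12, hd13, hd23, hD1eq⟩ := Finset.card_eq_three.mp hD1c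
    obtain ⟨e1, e2, e3, he12, he13, he23, hD2eq⟩ := Finset.card_eq_three.mp hD2c
    have hdm1 : d1 ∈ D1 := by rw [hD1eq]; simp
    have hdm2 : d2 ∈ D1 := by rw [hD1eq]; simp
    have hdm3 : d3 ∈ D1 := by rw [hD1eq]; simp
    have hem1 : e1 ∈ D2 := by rw [hD2eq]; simp
    have hem2 : e2 ∈ D2 := by rw [hD2eq]; simp
    have hem3 : e3 ∈ D2 := by rw [hD2eq]; simp
    have hUV : D1 ∪ D2 ⊆ V := Finset.union_subset hD1V hD2V
    have hUc : (D1 ∪ D2).card = 6 := by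
      rw [Finset.card_union_of_disjoint hdD, hD1c, hD2c]
    set F : Finset α := V \ (D1 ∪ D2) with hFdef
    have hFcard : F.card = V.card - 6 := by rw [hFdef, Finset.card_sdiff_of_subset hUV, hUc]
    have hFV : ∀ z ∈ F, z ∈ V := fun z hz => (Finset.mem_sdiff.mp hz).1
    have hFD : ∀ z ∈ F, z ∉ D1 ∧ z ∉ D2 := by
      intro z hz
      have := (Finset.mem_sdiff.mp hz).2
      rw [Finset.mem_union] at this
      push_neg at this
      exact this
    have hd3F : d3 ∉ F := fun h => (hFD d3 h).1 hdm3
    have he1F : e1 ∉ F := fun h => (hFD e1 h).2 hem1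
    -- picks
    obtain ⟨u1, hu1⟩ := Finset.card_pos.mp (show 0 < F.card by omega)
    set G1 := F.erase u1 with hG1
    have hG1c : G1.card = F.card - 1 := Finset.card_erase_of_mem hu1
    have hd3u1 : d3 ≠ u1 := fun h => hd3F (h ▸ hu1)
    obtain ⟨u2, hu2, hu2nb⟩ := psts_pick hpsts hd3u1 (G := G1)
      (by omega) (fun h => hd3F (Finset.mem_of_mem_erase h)) (Finset.notMem_erase u1 _)
    have hu2F : u2 ∈ F := Finset.mem_of_mem_erase hu2
    set G2 := G1.erase u2 with hG2
    have hG2c : G2.card = F.card - 2 := by rw [hG2, Finset.card_erase_of_mem hu2]; omega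
    have hd3u2 : d3 ≠ u2 := fun h => hd3F (h ▸ hu2F)
    obtain ⟨u3, hu3, hu3nb⟩ := psts_pick hpsts hd3u2 (G := G2)
      (by omega)
      (fun h => hd3F (Finset.mem_of_mem_erase (Finset.mem_of_mem_erase h)))
      (Finset.notMem_erase u2 _)
    have hu3F : u3 ∈ F := Finset.mem_of_mem_erase (Finset.mem_of_mem_erase hu3)
    set G3 := G2.erase u3 with hG3
    have hG3c : G3.card = F.card - 3 := by rw [hG3, Finset.card_erase_of_mem hu3]; omega
    obtain ⟨v1, hv1⟩ := Finset.card_pos.mp (show 0 < G3.card by omega)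
    have hv1F : v1 ∈ F := by
      rw [hG3, hG2, hG1] at hv1
      exact Finset.mem_of_mem_erase (Finset.mem_of_mem_erase (Finset.mem_of_mem_erase hv1))
    set G4 := G3.erase v1 with hG4
    have hG4c : G4.card = F.card - 4 := by rw [hG4, Finset.card_erase_of_mem hv1]; omega
    have he1v1 : e1 ≠ v1 := fun h => he1F (h ▸ hv1F)
    have hG4F : ∀ z ∈ G4, z ∈ F := by
      intro z hz
      rw [hG4, hG3, hG2, hG1] at hz
      exact Finset.mem_of_mem_erase (Finset.mem_of_mem_erase
        (Finset.mem_of_mem_erase (Finset.mem_of_mem_erase hz)))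
    obtain ⟨v2, hv2, hv2nb⟩ := psts_pick hpsts he1v1 (G := G4)
      (by omega) (fun h => he1F (hG4F e1 h)) (Finset.notMem_erase v1 _)
    have hv2F : v2 ∈ F := hG4F v2 hv2
    set G5 := G4.erase v2 with hG5
    have hG5c : G5.card = F.card - 5 := by rw [hG5, Finset.card_erase_of_mem hv2]; omega
    obtain ⟨v3, hv3⟩ := Finset.card_pos.mp (show 0 < G5.card by omega)
    have hv3F : v3 ∈ F := hG4F v3 (Finset.mem_of_mem_erase hv3)
    set Rs : Finset α := G5.erase v3 with hRs
    have hRc : Rs.card = F.card - 6 := by rw [hRs, Finset.card_erase_of_mem hv3]; omega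
    -- distinctness among picks
    have hu2u1 : u2 ≠ u1 := Finset.ne_of_mem_erase hu2
    have hu3u2 : u3 ≠ u2 := Finset.ne_of_mem_erase hu3
    have hu3u1 : u3 ≠ u1 := Finset.ne_of_mem_erase (Finset.mem_of_mem_erase hu3)
    have hv1u3 : v1 ≠ u3 := Finset.ne_of_mem_erase hv1
    have hv1u2 : v1 ≠ u2 := Finset.ne_of_mem_erase (Finset.mem_of_mem_erase hv1)
    have hv1u1 : v1 ≠ u1 := Finset.ne_of_mem_erase
      (Finset.mem_of_mem_erase (Finset.mem_of_mem_erase hv1))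
    have hv2v1 : v2 ≠ v1 := Finset.ne_of_mem_erase hv2
    have hv2u3 : v2 ≠ u3 := Finset.ne_of_mem_erase (Finset.mem_of_mem_erase hv2)
    have hv2u2 : v2 ≠ u2 := Finset.ne_of_mem_erase
      (Finset.mem_of_mem_erase (Finset.mem_of_mem_erase hv2))
    have hv2u1 : v2 ≠ u1 := Finset.ne_of_mem_erase
      (Finset.mem_of_mem_erase (Finset.mem_of_mem_erase (Finset.mem_of_mem_erase hv2)))
    have hv3v2 : v3 ≠ v2 := Finset.ne_of_mem_erase hv3
    have hv3v1 : v3 ≠ v1 := Finset.ne_of_mem_erase (Finset.mem_of_mem_erase hv3)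
    have hv3u3 : v3 ≠ u3 := Finset.ne_of_mem_erase
      (Finset.mem_of_mem_erase (Finset.mem_of_mem_erase hv3))
    have hv3u2 : v3 ≠ u2 := Finset.ne_of_mem_erase
      (Finset.mem_of_mem_erase (Finset.mem_of_mem_erase (Finset.mem_of_mem_erase hv3)))
    have hv3u1 : v3 ≠ u1 := Finset.ne_of_mem_erase (Finset.mem_of_mem_erase
      (Finset.mem_of_mem_erase (Finset.mem_of_mem_erase (Finset.mem_of_mem_erase hv3))))
    -- named points vs free points
    have hFne : ∀ w ∈ F, w ≠ d1 ∧ w ≠ d2 ∧ w ≠ d3 ∧ w ≠ e1 ∧ w ≠ e2 ∧ w ≠ e3 := by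
      intro w hw
      obtain ⟨hw1, hw2⟩ := hFD w hw
      rw [hD1eq] at hw1
      rw [hD2eq] at hw2
      simp only [Finset.mem_insert, Finset.mem_singleton] at hw1 hw2
      push_neg at hw1 hw2
      exact ⟨hw1.1, hw1.2.1, hw1.2.2, hw2.1, hw2.2.1, hw2.2.2⟩
    obtain ⟨q11, q12, q13, q14, q15, q16⟩ := hFne u1 hu1
    obtain ⟨q21, q22, q23, q24, q25, q26⟩ := hFne u2 hu2F
    obtain ⟨q31, q32, q33, q34, q35, q36⟩ := hFne u3 hu3F
    obtain ⟨q41, q42, q43, q44, q45, q46⟩ := hFne v1 hv1F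
    obtain ⟨q51, q52, q53, q54, q55, q56⟩ := hFne v2 hv2F
    obtain ⟨q61, q62, q63, q64, q65, q66⟩ := hFne v3 hv3F
    have hde : ∀ x ∈ D1, ∀ y ∈ D2, x ≠ y := by
      intro x hx y hy h
      exact (Finset.disjoint_left.mp hdD hx) (h ▸ hy)
    have r11 : d1 ≠ e1 := hde d1 hdm1 e1 hem1
    have r12 : d1 ≠ e2 := hde d1 hdm1 e2 hem2
    have r13 : d1 ≠ e3 := hde d1 hdm1 e3 hem3
    have r21 : d2 ≠ e1 := hde d2 hdm2 e1 hem1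
    have r22 : d2 ≠ e2 := hde d2 hdm2 e2 hem2
    have r23 : d2 ≠ e3 := hde d2 hdm2 e3 hem3
    have r31 : d3 ≠ e1 := hde d3 hdm3 e1 hem1
    have r32 : d3 ≠ e2 := hde d3 hdm3 e2 hem2
    have r33 : d3 ≠ e3 := hde d3 hdm3 e3 hem3
    have hRmem : ∀ z ∈ Rs.toList, z ≠ u1 ∧ z ≠ u2 ∧ z ≠ u3 ∧ z ≠ v1 ∧ z ≠ v2 ∧ z ≠ v3 ∧
        z ∈ V ∧ z ∉ D1 ∧ z ∉ D2 := by
      intro z hz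
      have hz' : z ∈ Rs := Finset.mem_toList.mp hz
      rw [hRs, hG5, hG4, hG3, hG2, hG1] at hz'
      have n6 : z ≠ v3 := Finset.ne_of_mem_erase hz'
      have hz5 := Finset.mem_of_mem_erase hz'
      have n5 : z ≠ v2 := Finset.ne_of_mem_erase hz5
      have hz4 := Finset.mem_of_mem_erase hz5
      have n4 : z ≠ v1 := Finset.ne_of_mem_erase hz4
      have hz3 := Finset.mem_of_mem_erase hz4
      have n3 : z ≠ u3 := Finset.ne_of_mem_erase hz3
      have hz2 := Finset.mem_of_mem_erase hz3
      have n2 : z ≠ u2 := Finset.ne_of_mem_erase hz2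
      have hz1 := Finset.mem_of_mem_erase hz2
      have n1 : z ≠ u1 := Finset.ne_of_mem_erase hz1
      have hzF : z ∈ F := Finset.mem_of_mem_erase hz1
      exact ⟨n1, n2, n3, n4, n5, n6, hFV z hzF, (hFD z hzF).1, (hFD z hzF).2⟩
    set l : List α := [d1, d2, u1, d3, u2, u3] ++ (Rs.toList ++ [v1, v2, e1, e2, v3, e3])
      with hldef
    have hlnd : l.Nodup := by
      rw [hldef]
      refine List.Nodup.append ?_ (List.Nodup.append (Finset.nodup_toList _) ?_ ?_) ?_
      · simp [hd12, hd13, hd23, q11.symm, q21.symm, q31.symm, q12.symm, q22.symm,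
          q32.symm, q13.symm, q23.symm, q33.symm, hu2u1.symm, hu3u1.symm, hu3u2.symm,
          hd3u1.symm, hd3u2]
      · simp [hv2v1.symm, hv3v1.symm, hv3v2.symm, q44, q45, q46, q54, q55, q56,
          q64.symm, q65.symm, q66, he12, he13, he23]
      · intro z hz hz2
        obtain ⟨n1, n2, n3, n4, n5, n6, _, hzD1, hzD2⟩ := hRmem z hz
        simp only [List.mem_cons, List.not_mem_nil, or_false] at hz2
        rcases hz2 with rfl | rfl | rfl | rfl | rfl | rfl
        exacts [n4 rfl, n5 rfl, hzD2 hem1, hzD2 hem2, n6 rfl, hzD2 hem3]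
      · intro z hz hz2
        simp only [List.mem_cons, List.not_mem_nil, or_false] at hz
        simp only [List.mem_append, List.mem_cons, List.not_mem_nil, or_false] at hz2
        rcases hz2 with hR | (rfl | rfl | rfl | rfl | rfl | rfl)
        · rcases hz with rfl | rfl | rfl | rfl | rfl | rfl
          exacts [(hRmem _ hR).2.2.2.2.2.2.2.1 hdm1, (hRmem _ hR).2.2.2.2.2.2.2.1 hdm2,
            (hRmem _ hR).1 rfl, (hRmem _ hR).2.2.2.2.2.2.2.1 hdm3,
            (hRmem _ hR).2.1 rfl, (hRmem _ hR).2.2.1 rfl]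
        · rcases hz with rfl | rfl | rfl | rfl | rfl | rfl
          exacts [absurd rfl q41, absurd rfl q42, absurd rfl hv1u1, absurd rfl q43,
            absurd rfl hv1u2, absurd rfl hv1u3]
        · rcases hz with rfl | rfl | rfl | rfl | rfl | rfl
          exacts [absurd rfl q51, absurd rfl q52, absurd rfl hv2u1, absurd rfl q53,
            absurd rfl hv2u2, absurd rfl hv2u3]
        · rcases hz with rfl | rfl | rfl | rfl | rfl | rfl
          exacts [absurd rfl r11, absurd rfl r21, absurd rfl q14, absurd rfl r31,
            absurd rfl q24, absurd rfl q34]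
        · rcases hz with rfl | rfl | rfl | rfl | rfl | rfl
          exacts [absurd rfl r12, absurd rfl r22, absurd rfl q15, absurd rfl r32,
            absurd rfl q25, absurd rfl q35]
        · rcases hz with rfl | rfl | rfl | rfl | rfl | rfl
          exacts [absurd rfl q61, absurd rfl q62, absurd rfl hv3u1, absurd rfl q63,
            absurd rfl hv3u2, absurd rfl hv3u3]
        · rcases hz with rfl | rfl | rfl | rfl | rfl | rfl
          exacts [absurd rfl r13, absurd rfl r23, absurd rfl q16, absurd rfl r33,
            absurd rfl q26, absurd rfl q36]
    have hltf : l.toFinset = V := by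
      rw [hldef]
      ext z
      rw [List.mem_toFinset]
      simp only [List.mem_append, List.mem_cons, List.not_mem_nil, or_false,
        Finset.mem_toList]
      constructor
      · rintro ((rfl | rfl | rfl | rfl | rfl | rfl) | (hzR | (rfl | rfl | rfl | rfl | rfl | rfl)))
        · exact hD1V hdm1
        · exact hD1V hdm2
        · exact hFV _ hu1
        · exact hD1V hdm3
        · exact hFV _ hu2F
        · exact hFV _ hu3F
        · exact (hRmem z (Finset.mem_toList.mpr hzR)).2.2.2.2.2.2.1
        · exact hFV _ hv1F
        · exact hFV _ hv2F
        · exact hD2V hem1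
        · exact hD2V hem2
        · exact hFV _ hv3F
        · exact hD2V hem3
      · intro hzV
        by_cases a1 : z = d1
        · exact Or.inl (Or.inl a1)
        by_cases a2 : z = d2
        · exact Or.inl (Or.inr (Or.inl a2))
        by_cases a3 : z = u1
        · exact Or.inl (Or.inr (Or.inr (Or.inl a3)))
        by_cases a4 : z = d3
        · exact Or.inl (Or.inr (Or.inr (Or.inr (Or.inl a4))))
        by_cases a5 : z = u2
        · exact Or.inl (Or.inr (Or.inr (Or.inr (Or.inr (Or.inl a5)))))
        by_cases a6 : z = u3
        · exact Or.inl (Or.inr (Or.inr (Or.inr (Or.inr (Or.inr a6)))))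
        by_cases b1 : z = v1
        · exact Or.inr (Or.inr (Or.inl b1))
        by_cases b2 : z = v2
        · exact Or.inr (Or.inr (Or.inr (Or.inl b2)))
        by_cases c1 : z = e1
        · exact Or.inr (Or.inr (Or.inr (Or.inr (Or.inl c1))))
        by_cases c2 : z = e2
        · exact Or.inr (Or.inr (Or.inr (Or.inr (Or.inr (Or.inl c2)))))
        by_cases b3 : z = v3
        · exact Or.inr (Or.inr (Or.inr (Or.inr (Or.inr (Or.inr (Or.inl b3))))))
        by_cases c3 : z = e3
        · exact Or.inr (Or.inr (Or.inr (Or.inr (Or.inr (Or.inr (Or.inr c3))))))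
        refine Or.inr (Or.inl ?_)
        rw [hRs, hG5, hG4, hG3, hG2, hG1]
        have hzD1 : z ∉ D1 := by
          rw [hD1eq]; simp only [Finset.mem_insert, Finset.mem_singleton]; push_neg
          exact ⟨a1, a2, a4⟩
        have hzD2 : z ∉ D2 := by
          rw [hD2eq]; simp only [Finset.mem_insert, Finset.mem_singleton]; push_neg
          exact ⟨c1, c2, c3⟩
        exact Finset.mem_erase.mpr ⟨b3, Finset.mem_erase.mpr ⟨b2, Finset.mem_erase.mpr ⟨b1,
          Finset.mem_erase.mpr ⟨a6, Finset.mem_erase.mpr ⟨a5, Finset.mem_erase.mpr ⟨a3,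
          Finset.mem_sdiff.mpr ⟨hzV, by rw [Finset.mem_union]; tauto⟩⟩⟩⟩⟩⟩⟩
    -- suffix decomposition
    have hlA : l = ([d1, d2, u1, d3, u2, u3] ++ Rs.toList) ++ [v1, v2, e1, e2, v3, e3] := by
      rw [hldef, List.append_assoc]
    have hAlen : ([d1, d2, u1, d3, u2, u3] ++ Rs.toList).length = F.card := by
      rw [List.length_append, Finset.length_toList, hRc]
      simp; omega
    have hllen : l.length = F.card + 6 := by
      rw [hlA, List.length_append, hAlen]
      simp
    refine ⟨l, hlnd, hltf, ?_⟩
    intro i m hne hlen hbp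
    obtain ⟨P, hPB, hPd, hPuni⟩ := hbp
    have htnd : ((l.drop i).take m).Nodup :=
      ((List.take_sublist _ _).trans (List.drop_sublist _ _)).nodup hlnd
    have hklen : ((l.drop i).take m).length = 3 * P.card := by
      have hbc := psts_partition_card hpsts hPB hPd
      rw [hPuni] at hbc
      rw [← List.toFinset_card_of_nodup htnd]
      exact hbc
    have hPlt : P.card < 3 := psts_card_lt h3 hPB hPd
    have hPpos : 0 < P.card := by
      have := List.length_pos_iff.2 hne
      omega
    have hilen : ((l.drop i).take m).length ≤ l.length - i := by
      rw [List.length_take, List.length_drop]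
      omega
    rcases (show P.card = 1 ∨ P.card = 2 by omega) with hp1 | hp2
    · -- single block window
      obtain ⟨K, hPK⟩ := Finset.card_eq_one.mp hp1
      have hKB : K ∈ B := hPB (hPK ▸ Finset.mem_singleton_self K)
      have hSK : ((l.drop i).take m).toFinset = K := by
        rw [← hPuni, hPK]
        simp
      have ht3 : (l.drop i).take m = (l.drop i).take 3 := by
        have hnm := psts_take_norm (l.drop i) m
        rw [hklen, hp1] at hnm
        simpa using hnm
      obtain ⟨z, hzor, hzS⟩ := psts_meets2 h3 hPB hPd hPuni hD1B hD2B hdD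
        ⟨d1, hdm1⟩ ⟨e1, hem1⟩ (by omega)
      have hzt : z ∈ (l.drop i).take m := List.mem_toFinset.mp hzS
      rcases hzor with hzD | hzD
      · -- window at the start
        have hi3 : i < 4 := by
          rw [hD1eq] at hzD
          simp only [Finset.mem_insert, Finset.mem_singleton] at hzD
          rcases hzD with rfl | rfl | rfl
          · have h := psts_window_lower hlnd
              (show l = [z] ++ ([d2, u1, d3, u2, u3] ++ (Rs.toList ++ [v1, v2, e1, e2, v3, e3]))
                by rw [hldef]; simp) (by simp) hzt
            simp at h; omega
          · have h := psts_window_lower hlnd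
              (show l = [d1, z] ++ ([u1, d3, u2, u3] ++ (Rs.toList ++ [v1, v2, e1, e2, v3, e3]))
                by rw [hldef]; simp) (by simp) hzt
            simp at h; omega
          · have h := psts_window_lower hlnd
              (show l = [d1, d2, u1, z] ++ ([u2, u3] ++ (Rs.toList ++ [v1, v2, e1, e2, v3, e3]))
                by rw [hldef]; simp) (by simp) hzt
            simp at h; omega
        interval_cases i
        · have hw : (l.drop 0).take 3 = [d1, d2, u1] := by rw [hldef]; rfl
          have hd1K : d1 ∈ K := by rw [← hSK, ht3, hw]; simp
          have hd2K : d2 ∈ K := by rw [← hSK, ht3, hw]; simp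
          have hKne : K ≠ D1 := by
            intro h
            have : u1 ∈ K := by rw [← hSK, ht3, hw]; simp
            exact (hFD u1 hu1).1 (h ▸ this)
          exact psts_two_common hpsts hKB hD1B hd1K hd2K hdm1 hdm2 hd12 hKne
        · have hw : (l.drop 1).take 3 = [d2, u1, d3] := by rw [hldef]; rfl
          have hd2K : d2 ∈ K := by rw [← hSK, ht3, hw]; simp
          have hd3K : d3 ∈ K := by rw [← hSK, ht3, hw]; simp
          have hKne : K ≠ D1 := by
            intro h
            have : u1 ∈ K := by rw [← hSK, ht3, hw]; simp
            exact (hFD u1 hu1).1 (h ▸ this)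
          exact psts_two_common hpsts hKB hD1B hd2K hd3K hdm2 hdm3 hd23 hKne
        · have hw : (l.drop 2).take 3 = [u1, d3, u2] := by rw [hldef]; rfl
          have hKeq : K = ({d3, u1, u2} : Finset α) := by
            rw [← hSK, ht3, hw]
            ext w
            simp only [List.toFinset_cons, List.toFinset_nil, insert_empty_eq,
              Finset.mem_insert, Finset.mem_singleton]
            tauto
          exact hu2nb (hKeq ▸ hKB)
        · have hw : (l.drop 3).take 3 = [d3, u2, u3] := by rw [hldef]; rfl
          have hKeq : K = ({d3, u2, u3} : Finset α) := by
            rw [← hSK, ht3, hw]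
            simp
          exact hu3nb (hKeq ▸ hKB)
      · -- window at the end
        have hzt3 : z ∈ (l.drop i).take 3 := ht3 ▸ hzt
        have hilo : F.card ≤ i := by
          rw [hD2eq] at hzD
          simp only [Finset.mem_insert, Finset.mem_singleton] at hzD
          rcases hzD with rfl | rfl | rfl
          · have h := psts_window_upper hlnd
              (show l = (([d1, d2, u1, d3, u2, u3] ++ Rs.toList) ++ [v1, v2]) ++ [z, e2, v3, e3]
                by rw [hlA]; simp) (by simp) hzt3
            rw [List.length_append, hAlen] at h
            simp at h; omega
          · have h := psts_window_upper hlnd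
              (show l = (([d1, d2, u1, d3, u2, u3] ++ Rs.toList) ++ [v1, v2, e1]) ++ [z, v3, e3]
                by rw [hlA]; simp) (by simp) hzt3
            rw [List.length_append, hAlen] at h
            simp at h; omega
          · have h := psts_window_upper hlnd
              (show l = (([d1, d2, u1, d3, u2, u3] ++ Rs.toList) ++ [v1, v2, e1, e2, v3]) ++ [z]
                by rw [hlA]; simp) (by simp) hzt3
            rw [List.length_append, hAlen] at h
            simp at h; omega
        have hihi : i ≤ F.card + 3 := by
          rw [hklen, hllen] at hilen
          omega
        have hAl : ([d1, d2, u1, d3, u2, u3] ++ Rs.toList).length = F.card := hAlen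
        rcases (show i = F.card ∨ i = F.card + 1 ∨ i = F.card + 2 ∨ i = F.card + 3 by omega)
          with rfl | rfl | rfl | rfl
        · have hw : (l.drop F.card).take 3 = [v1, v2, e1] := by
            rw [hlA, ← hAl, List.drop_left]
            rfl
          have hKeq : K = ({e1, v1, v2} : Finset α) := by
            rw [← hSK, ht3, hw]
            ext w
            simp only [List.toFinset_cons, List.toFinset_nil, insert_empty_eq,
              Finset.mem_insert, Finset.mem_singleton]
            tauto
          exact hv2nb (hKeq ▸ hKB)
        · have hw : (l.drop (F.card + 1)).take 3 = [v2, e1, e2] := by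
            rw [hlA, ← hAl, psts_drop_add]
            rfl
          have he1K : e1 ∈ K := by rw [← hSK, ht3, hw]; simp
          have he2K : e2 ∈ K := by rw [← hSK, ht3, hw]; simp
          have hKne : K ≠ D2 := by
            intro h
            have : v2 ∈ K := by rw [← hSK, ht3, hw]; simp
            exact (hFD v2 hv2F).2 (h ▸ this)
          exact psts_two_common hpsts hKB hD2B he1K he2K hem1 hem2 he12 hKne
        · have hw : (l.drop (F.card + 2)).take 3 = [e1, e2, v3] := by
            rw [hlA, ← hAl, psts_drop_add]
            rfl
          have he1K : e1 ∈ K := by rw [← hSK, ht3, hw]; simp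
          have he2K : e2 ∈ K := by rw [← hSK, ht3, hw]; simp
          have hKne : K ≠ D2 := by
            intro h
            have : v3 ∈ K := by rw [← hSK, ht3, hw]; simp
            exact (hFD v3 hv3F).2 (h ▸ this)
          exact psts_two_common hpsts hKB hD2B he1K he2K hem1 hem2 he12 hKne
        · have hw : (l.drop (F.card + 3)).take 3 = [e2, v3, e3] := by
            rw [hlA, ← hAl, psts_drop_add]
            rfl
          have he2K : e2 ∈ K := by rw [← hSK, ht3, hw]; simp
          have he3K : e3 ∈ K := by rw [← hSK, ht3, hw]; simp
          have hKne : K ≠ D2 := by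
            intro h
            have : v3 ∈ K := by rw [← hSK, ht3, hw]; simp
            exact (hFD v3 hv3F).2 (h ▸ this)
          exact psts_two_common hpsts hKB hD2B he2K he3K hem2 hem3 he23 hKne
    · -- two-block window: it would have to meet both D1 and D2, impossible
      have ht6 : (l.drop i).take m = (l.drop i).take 6 := by
        have hnm := psts_take_norm (l.drop i) m
        rw [hklen, hp2] at hnm
        simpa using hnm
      obtain ⟨z, hzD, hzS⟩ := psts_meets h3 hPB hPd hPuni hD1B ⟨d1, hdm1⟩ (by omega)
      obtain ⟨z', hzD', hzS'⟩ := psts_meets h3 hPB hPd hPuni hD2B ⟨e1, hem1⟩ (by omega)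
      have hzt : z ∈ (l.drop i).take m := List.mem_toFinset.mp hzS
      have hzt' : z' ∈ (l.drop i).take 6 := ht6 ▸ List.mem_toFinset.mp hzS'
      have hi3 : i < 4 := by
        rw [hD1eq] at hzD
        simp only [Finset.mem_insert, Finset.mem_singleton] at hzD
        rcases hzD with rfl | rfl | rfl
        · have h := psts_window_lower hlnd
            (show l = [z] ++ ([d2, u1, d3, u2, u3] ++ (Rs.toList ++ [v1, v2, e1, e2, v3, e3]))
              by rw [hldef]; simp) (by simp) hzt
          simp at h; omega
        · have h := psts_window_lower hlnd
            (show l = [d1, z] ++ ([u1, d3, u2, u3] ++ (Rs.toList ++ [v1, v2, e1, e2, v3, e3]))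
              by rw [hldef]; simp) (by simp) hzt
          simp at h; omega
        · have h := psts_window_lower hlnd
            (show l = [d1, d2, u1, z] ++ ([u2, u3] ++ (Rs.toList ++ [v1, v2, e1, e2, v3, e3]))
              by rw [hldef]; simp) (by simp) hzt
          simp at h; omega
      have hFc7 : 7 ≤ F.card := by omega
      rw [hD2eq] at hzD'
      simp only [Finset.mem_insert, Finset.mem_singleton] at hzD'
      rcases hzD' with rfl | rfl | rfl
      · have h := psts_window_upper hlnd
          (show l = (([d1, d2, u1, d3, u2, u3] ++ Rs.toList) ++ [v1, v2]) ++ [z', e2, v3, e3]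
            by rw [hlA]; simp) (by simp) hzt'
        rw [List.length_append, hAlen] at h
        simp at h; omega
      · have h := psts_window_upper hlnd
          (show l = (([d1, d2, u1, d3, u2, u3] ++ Rs.toList) ++ [v1, v2, e1]) ++ [z', v3, e3]
            by rw [hlA]; simp) (by simp) hzt'
        rw [List.length_append, hAlen] at h
        simp at h; omega
      · have h := psts_window_upper hlnd
          (show l = (([d1, d2, u1, d3, u2, u3] ++ Rs.toList) ++ [v1, v2, e1, e2, v3]) ++ [z']
            by rw [hlA]; simp) (by simp) hzt'
        rw [List.length_append, hAlen] at h
        simp at h; omega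

  by_cases h1 : HasDisjointBlocks B 1
  · -- exactly one disjoint block at most: an intersecting family
    obtain ⟨P₀, hP₀B, hP₀c, _⟩ := h1
    obtain ⟨D1, rfl⟩ := Finset.card_eq_one.mp hP₀c
    have hD1B : D1 ∈ B := hP₀B (Finset.mem_singleton_self D1)
    obtain ⟨hD1V, hD1c⟩ := hpsts.1 D1 hD1B
    obtain ⟨d1, d2, d3, hd12, hd13, hd23, hD1eq⟩ := Finset.card_eq_three.mp hD1c
    have hdm1 : d1 ∈ D1 := by rw [hD1eq]; simp
    have hdm2 : d2 ∈ D1 := by rw [hD1eq]; simp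
    have hdm3 : d3 ∈ D1 := by rw [hD1eq]; simp
    have hFcard : (V \ D1).card = V.card - 3 := by rw [Finset.card_sdiff_of_subset hD1V, hD1c]
    obtain ⟨u1, hu1⟩ := Finset.card_pos.mp (show 0 < (V \ D1).card by omega)
    have hnotF : ∀ z ∈ D1, z ∉ V \ D1 := fun z hz hzF => (Finset.mem_sdiff.mp hzF).2 hz
    have hd3u1 : d3 ≠ u1 := fun h => (hnotF d3 hdm3) (h ▸ hu1)
    obtain ⟨u2, hu2, hu2nb⟩ := psts_pick hpsts hd3u1
      (G := (V \ D1).erase u1)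
      (by rw [Finset.card_erase_of_mem hu1]; omega)
      (fun h => hnotF d3 hdm3 (Finset.mem_of_mem_erase h))
      (Finset.notMem_erase u1 _)
    have hu2F : u2 ∈ V \ D1 := Finset.mem_of_mem_erase hu2
    have hu2u1 : u2 ≠ u1 := Finset.ne_of_mem_erase hu2
    have hd3u2 : d3 ≠ u2 := fun h => hnotF d3 hdm3 (h ▸ hu2F)
    obtain ⟨u3, hu3, hu3nb⟩ := psts_pick hpsts hd3u2
      (G := ((V \ D1).erase u1).erase u2)
      (by rw [Finset.card_erase_of_mem hu2, Finset.card_erase_of_mem hu1]; omega)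
      (fun h => hnotF d3 hdm3 (Finset.mem_of_mem_erase (Finset.mem_of_mem_erase h)))
      (Finset.notMem_erase u2 _)
    have hu3F : u3 ∈ V \ D1 := Finset.mem_of_mem_erase (Finset.mem_of_mem_erase hu3)
    have hu3u2 : u3 ≠ u2 := Finset.ne_of_mem_erase hu3
    have hu3u1 : u3 ≠ u1 := Finset.ne_of_mem_erase (Finset.mem_of_mem_erase hu3)
    have hu1D : u1 ∉ D1 := (Finset.mem_sdiff.mp hu1).2
    have hu2D : u2 ∉ D1 := (Finset.mem_sdiff.mp hu2F).2
    have hu3D : u3 ∉ D1 := (Finset.mem_sdiff.mp hu3F).2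
    have du11 : d1 ≠ u1 := fun h => hu1D (h ▸ hdm1)
    have du12 : d1 ≠ u2 := fun h => hu2D (h ▸ hdm1)
    have du13 : d1 ≠ u3 := fun h => hu3D (h ▸ hdm1)
    have du21 : d2 ≠ u1 := fun h => hu1D (h ▸ hdm2)
    have du22 : d2 ≠ u2 := fun h => hu2D (h ▸ hdm2)
    have du23 : d2 ≠ u3 := fun h => hu3D (h ▸ hdm2)
    have du33 : d3 ≠ u3 := fun h => hu3D (h ▸ hdm3)
    set Rst : Finset α := (((V \ D1).erase u1).erase u2).erase u3 with hRst
    have hRmem : ∀ z ∈ Rst.toList, z ≠ u1 ∧ z ≠ u2 ∧ z ≠ u3 ∧ z ∈ V ∧ z ∉ D1 := by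
      intro z hz
      have hz' : z ∈ Rst := Finset.mem_toList.mp hz
      have h3' : z ≠ u3 := Finset.ne_of_mem_erase hz'
      have hz2 : z ∈ ((V \ D1).erase u1).erase u2 := Finset.mem_of_mem_erase hz'
      have h2' : z ≠ u2 := Finset.ne_of_mem_erase hz2
      have hz1 : z ∈ (V \ D1).erase u1 := Finset.mem_of_mem_erase hz2
      have h1' : z ≠ u1 := Finset.ne_of_mem_erase hz1
      have hzV : z ∈ V \ D1 := Finset.mem_of_mem_erase hz1
      exact ⟨h1', h2', h3', (Finset.mem_sdiff.mp hzV).1, (Finset.mem_sdiff.mp hzV).2⟩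
    set l : List α := [d1, d2, u1, d3, u2, u3] ++ Rst.toList with hldef
    have hlnd : l.Nodup := by
      rw [hldef]
      refine List.Nodup.append ?_ (Finset.nodup_toList _) ?_
      · simp [hd12, hd13, hd23, du11, du12, du13, du21, du22, du23, du33,
          hd3u1.symm, hd3u2, hu2u1.symm, hu3u1.symm, hu3u2.symm]
      · intro z hz hzR
        obtain ⟨g1, g2, g3, _, gD⟩ := hRmem z hzR
        simp only [List.mem_cons, List.not_mem_nil, or_false] at hz
        rcases hz with rfl | rfl | rfl | rfl | rfl | rfl
        exacts [gD hdm1, gD hdm2, g1 rfl, gD hdm3, g2 rfl, g3 rfl]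
    have hltf : l.toFinset = V := by
      rw [hldef]
      ext z
      rw [List.mem_toFinset]
      simp only [List.mem_append, List.mem_cons, List.not_mem_nil, or_false,
        Finset.mem_toList]
      constructor
      · rintro ((rfl | rfl | rfl | rfl | rfl | rfl) | hzR)
        · exact hD1V hdm1
        · exact hD1V hdm2
        · exact (Finset.mem_sdiff.mp hu1).1
        · exact hD1V hdm3
        · exact (Finset.mem_sdiff.mp hu2F).1
        · exact (Finset.mem_sdiff.mp hu3F).1
        · exact (Finset.mem_sdiff.mp (Finset.mem_of_mem_erase (Finset.mem_of_mem_erase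
            (Finset.mem_of_mem_erase hzR)))).1
      · intro hzV
        by_cases e1 : z = d1
        · exact Or.inl (Or.inl e1)
        by_cases e2 : z = d2
        · exact Or.inl (Or.inr (Or.inl e2))
        by_cases e3 : z = u1
        · exact Or.inl (Or.inr (Or.inr (Or.inl e3)))
        by_cases e4 : z = d3
        · exact Or.inl (Or.inr (Or.inr (Or.inr (Or.inl e4))))
        by_cases e5 : z = u2
        · exact Or.inl (Or.inr (Or.inr (Or.inr (Or.inr (Or.inl e5)))))
        by_cases e6 : z = u3
        · exact Or.inl (Or.inr (Or.inr (Or.inr (Or.inr (Or.inr e6)))))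
        · refine Or.inr ?_
          have hzD : z ∉ D1 := by
            rw [hD1eq]
            simp only [Finset.mem_insert, Finset.mem_singleton]
            push_neg
            exact ⟨e1, e2, e4⟩
          exact Finset.mem_erase.mpr ⟨e6, Finset.mem_erase.mpr ⟨e5,
            Finset.mem_erase.mpr ⟨e3, Finset.mem_sdiff.mpr ⟨hzV, hzD⟩⟩⟩⟩
    refine ⟨l, hlnd, hltf, ?_⟩
    intro i m hne hlen hbp
    obtain ⟨P, hPB, hPd, hPuni⟩ := hbp
    have htnd : ((l.drop i).take m).Nodup :=
      ((List.take_sublist _ _).trans (List.drop_sublist _ _)).nodup hlnd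
    have hklen : ((l.drop i).take m).length = 3 * P.card := by
      have hbc := psts_partition_card hpsts hPB hPd
      rw [hPuni] at hbc
      rw [← List.toFinset_card_of_nodup htnd]
      exact hbc
    have hPlt : P.card < 2 := psts_card_lt h2 hPB hPd
    have hPpos : 0 < P.card := by
      have := List.length_pos_iff.2 hne
      omega
    have hp1 : P.card = 1 := by omega
    obtain ⟨K, hPK⟩ := Finset.card_eq_one.mp hp1
    have hKB : K ∈ B := hPB (hPK ▸ Finset.mem_singleton_self K)
    have hSK : ((l.drop i).take m).toFinset = K := by
      rw [← hPuni, hPK]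
      simp
    have ht3 : (l.drop i).take m = (l.drop i).take 3 := by
      have hnm := psts_take_norm (l.drop i) m
      rw [hklen, hp1] at hnm
      simpa using hnm
    obtain ⟨z, hzD, hzS⟩ := psts_meets h2 hPB hPd hPuni hD1B ⟨d1, hdm1⟩ (by omega)
    have hzt : z ∈ (l.drop i).take m := List.mem_toFinset.mp hzS
    have hi3 : i < 4 := by
      rw [hD1eq] at hzD
      simp only [Finset.mem_insert, Finset.mem_singleton] at hzD
      rcases hzD with rfl | rfl | rfl
      · have h := psts_window_lower hlnd
          (show l = [z] ++ ([d2, u1, d3, u2, u3] ++ Rst.toList) by rw [hldef]; simp)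
          (by simp) hzt
        simp at h; omega
      · have h := psts_window_lower hlnd
          (show l = [d1, z] ++ ([u1, d3, u2, u3] ++ Rst.toList) by rw [hldef]; simp)
          (by simp) hzt
        simp at h; omega
      · have h := psts_window_lower hlnd
          (show l = [d1, d2, u1, z] ++ ([u2, u3] ++ Rst.toList) by rw [hldef]; simp)
          (by simp) hzt
        simp at h; omega
    interval_cases i
    · have hw : (l.drop 0).take 3 = [d1, d2, u1] := by rw [hldef]; rfl
      have hd1K : d1 ∈ K := by rw [← hSK, ht3, hw]; simp
      have hd2K : d2 ∈ K := by rw [← hSK, ht3, hw]; simp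
      have hKne : K ≠ D1 := by
        intro h
        have : u1 ∈ K := by rw [← hSK, ht3, hw]; simp
        exact hu1D (h ▸ this)
      exact psts_two_common hpsts hKB hD1B hd1K hd2K hdm1 hdm2 hd12 hKne
    · have hw : (l.drop 1).take 3 = [d2, u1, d3] := by rw [hldef]; rfl
      have hd2K : d2 ∈ K := by rw [← hSK, ht3, hw]; simp
      have hd3K : d3 ∈ K := by rw [← hSK, ht3, hw]; simp
      have hKne : K ≠ D1 := by
        intro h
        have : u1 ∈ K := by rw [← hSK, ht3, hw]; simp
        exact hu1D (h ▸ this)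
      exact psts_two_common hpsts hKB hD1B hd2K hd3K hdm2 hdm3 hd23 hKne
    · have hw : (l.drop 2).take 3 = [u1, d3, u2] := by rw [hldef]; rfl
      have hKeq : K = ({d3, u1, u2} : Finset α) := by
        rw [← hSK, ht3, hw]
        ext w
        simp only [List.toFinset_cons, List.toFinset_nil, insert_empty_eq,
          Finset.mem_insert, Finset.mem_singleton]
        tauto
      exact hu2nb (hKeq ▸ hKB)
    · have hw : (l.drop 3).take 3 = [d3, u2, u3] := by rw [hldef]; rfl
      have hKeq : K = ({d3, u2, u3} : Finset α) := by
        rw [← hSK, ht3, hw]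
        simp
      exact hu3nb (hKeq ▸ hKB)
  · -- no blocks at all
    have hBe : ∀ K, K ∉ B := by
      intro K hK
      exact h1 ⟨{K}, by simpa using hK, Finset.card_singleton K, by simp⟩
    refine ⟨V.toList, Finset.nodup_toList V, Finset.toList_toFinset V, ?_⟩
    intro i m hne _ hbp
    obtain ⟨P, hPB, -, hPuni⟩ := hbp
    have hP : P = ∅ := Finset.eq_empty_of_forall_notMem (fun K hK => hBe K (hPB hK))
    obtain ⟨z, hz⟩ := List.exists_mem_of_ne_nil _ hne
    have : z ∈ P.biUnion id := hPuni ▸ List.mem_toFinset.2 hz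
    simp [hP] at this
end
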